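/- arXiv:2410.23416 — 5 statements merged into one kernel-verified Lean document; each statement's English description precedes it below -/
import Mathlib

section
/- If an allocation A of a finite set of goods S among n agents with additive nonnegative valuations is SD-EF1, then A is SD-PROP1. -/
open Finset
open scoped Classical

noncomputable section

/-- `A` is an allocation of the set of goods `S` among `n` agents. -/
def IsAlloc {G : Type*} (n : ℕ) (S : Finset G) (A : Fin n → Finset G) : Prop :=
  (∀ i j : Fin n, i ≠ j → Disjoint (A i) (A j)) ∧ Finset.univ.biUnion A = S

/-- The top-set `H_i(S,g) = {g' ∈ S : v g' ≥ v g}`. -/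
def topSet {G : Type*} (v : G → ℝ) (S : Finset G) (g : G) : Finset G :=
  S.filter (fun g' => v g ≤ v g')

/-- Stochastic dominance: `X ≽^SD Y` w.r.t. valuation `v` over the set of goods `S`. -/
def SDge {G : Type*} [DecidableEq G] (v : G → ℝ) (S X Y : Finset G) : Prop :=
  ∀ g ∈ S, (Y ∩ topSet v S g).card ≤ (X ∩ topSet v S g).card

/-- The allocation `A` of goods `S` is SD-EF1. -/
def SDEF1 {G : Type*} [DecidableEq G] (n : ℕ) (v : Fin n → G → ℝ) (S : Finset G)
    (A : Fin n → Finset G) : Prop :=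
  ∀ i j : Fin n, A j ≠ ∅ → ∃ g ∈ A j, SDge (v i) S (A i) ((A j).erase g)

/-- The allocation `A` of goods `S` is SD-PROP1: every agent `i` with `A i ≠ S` has a good
`g ∈ S \ A i` such that `|(A i ∪ {g}) ∩ H_i(S,g')| ≥ ⌈|H_i(S,g')| / n⌉` for all `g' ∈ S`. -/
def SDPROP1 {G : Type*} [DecidableEq G] (n : ℕ) (v : Fin n → G → ℝ) (S : Finset G)
    (A : Fin n → Finset G) : Prop :=
  ∀ i : Fin n, A i ≠ S → ∃ g ∈ S \ A i, ∀ g' ∈ S,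
    Nat.ceil (((topSet (v i) S g').card : ℚ) / n) ≤ ((insert g (A i)) ∩ topSet (v i) S g').card

/-!
Fix agent `i` and let `g` be the good that `i` values most among the goods whose removal from
another agent's bundle makes `A i` SD-dominate that bundle. Then for every top-set `H` of `i`,
each bundle meets `H` in at most `|(A i ∪ {g}) ∩ H|` goods: if the witness of bundle `A j` lies
in `H`, so does `g`, which pays for it. Summing over the `n` disjoint bundles covering `H` gives
`|H| ≤ n · |(A i ∪ {g}) ∩ H|`.
-/

theorem Finset.card_inter_le_card_insert_inter_of_card_erase_inter_le {G : Type*} [DecidableEq G]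
    {X Y H : Finset G} {g y : G} (hgX : g ∉ X) (hyg : y ∈ H → g ∈ H)
    (hle : ((Y.erase y) ∩ H).card ≤ (X ∩ H).card) :
    (Y ∩ H).card ≤ (insert g X ∩ H).card := by
  rw [erase_inter] at hle
  by_cases hy : y ∈ H
  · rw [insert_inter_of_mem (hyg hy), card_insert_of_notMem fun h => hgX (mem_inter.1 h).1]
    have := pred_card_le_card_erase (s := Y ∩ H) (a := y)
    omega
  · rw [erase_eq_of_notMem fun h => hy (mem_inter.1 h).2] at hle
    exact hle.trans (card_le_card (inter_subset_inter_right (subset_insert g X)))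

theorem Nat.ceil_div_le_of_le_mul {K : Type*} [Field K] [LinearOrder K] [IsStrictOrderedRing K]
    [FloorSemiring K] {a n k : ℕ} (hn : 0 < n) (h : a ≤ n * k) :
    ⌈(a : K) / n⌉₊ ≤ k := by
  rw [Nat.ceil_le, div_le_iff₀ (by exact_mod_cast hn)]
  exact_mod_cast h.trans_eq (mul_comm n k)

section

variable {G : Type*} {n : ℕ} {S : Finset G} {A : Fin n → Finset G}

theorem mem_topSet {v : G → ℝ} {g x : G} : x ∈ topSet v S g ↔ x ∈ S ∧ v g ≤ v x :=
  mem_filter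

theorem mem_topSet_of_le {v : G → ℝ} {g x y : G} (hx : x ∈ topSet v S g) (hy : y ∈ S)
    (hxy : v x ≤ v y) : y ∈ topSet v S g :=
  mem_topSet.2 ⟨hy, (mem_topSet.1 hx).2.trans hxy⟩

namespace IsAlloc

theorem subset (hA : IsAlloc n S A) (j : Fin n) : A j ⊆ S := by
  rw [← hA.2]
  exact subset_biUnion_of_mem A (mem_univ j)

theorem notMem_of_mem_of_ne (hA : IsAlloc n S A) {i j : Fin n} {g : G} (hg : g ∈ A j)
    (hji : j ≠ i) : g ∉ A i :=
  disjoint_left.1 (hA.1 j i hji) hg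

theorem exists_mem (hA : IsAlloc n S A) {x : G} (hx : x ∈ S) : ∃ j, x ∈ A j := by
  obtain ⟨j, -, hxj⟩ := mem_biUnion.1 (hA.2 ▸ hx)
  exact ⟨j, hxj⟩

theorem exists_ne_ne_empty (hA : IsAlloc n S A) {i : Fin n} (hi : A i ≠ S) :
    ∃ j, j ≠ i ∧ A j ≠ ∅ := by
  by_contra! h
  refine hi ((hA.subset i).antisymm fun x hx => ?_)
  obtain ⟨j, hxj⟩ := hA.exists_mem hx
  obtain rfl | hji := eq_or_ne j i
  · exact hxj
  · simp [h j hji] at hxj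

theorem card_eq_sum_card_inter [DecidableEq G] (hA : IsAlloc n S A) {H : Finset G}
    (hH : H ⊆ S) : H.card = ∑ j, (A j ∩ H).card := by
  have hcover : H = univ.biUnion fun j => A j ∩ H := by
    ext x
    simp only [mem_biUnion, mem_univ, mem_inter, true_and]
    refine ⟨fun hx => ?_, fun ⟨_, _, hx⟩ => hx⟩
    obtain ⟨j, hxj⟩ := hA.exists_mem (hH hx)
    exact ⟨j, hxj, hx⟩
  conv_lhs => rw [hcover]
  exact card_biUnion fun j _ j' _ hjj' =>
    (hA.1 j j' hjj').mono inter_subset_left inter_subset_left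

end IsAlloc

variable [DecidableEq G] {v : Fin n → G → ℝ}

theorem SDEF1.exists_witness_le (hA : IsAlloc n S A) (hsd : SDEF1 n v S A) {i : Fin n}
    (hi : A i ≠ S) :
    ∃ g ∈ S \ A i, ∀ j, j ≠ i → A j ≠ ∅ →
      ∃ gj, SDge (v i) S (A i) ((A j).erase gj) ∧ v i gj ≤ v i g := by
  set T := S.filter fun g => ∃ j, j ≠ i ∧ g ∈ A j ∧ SDge (v i) S (A i) ((A j).erase g)
  have hT : ∀ j, j ≠ i → A j ≠ ∅ → ∃ gj ∈ T, SDge (v i) S (A i) ((A j).erase gj) := by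
    intro j hji hj
    obtain ⟨gj, hgj, hsdj⟩ := hsd i j hj
    exact ⟨gj, mem_filter.2 ⟨hA.subset j hgj, j, hji, hgj, hsdj⟩, hsdj⟩
  obtain ⟨j₀, hj₀i, hj₀⟩ := hA.exists_ne_ne_empty hi
  obtain ⟨g, hgT, hgmax⟩ := T.exists_max_image (v i)
    ((hT j₀ hj₀i hj₀).imp fun _ h => h.1)
  obtain ⟨hgS, j, hji, hgj, -⟩ := mem_filter.1 hgT
  refine ⟨g, mem_sdiff.2 ⟨hgS, hA.notMem_of_mem_of_ne hgj hji⟩, fun j hji hj => ?_⟩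
  obtain ⟨gj, hgjT, hsdj⟩ := hT j hji hj
  exact ⟨gj, hsdj, hgmax gj hgjT⟩

theorem card_inter_topSet_le_of_witness_le {i : Fin n} {g g' : G}
    (hg : g ∈ S \ A i)
    (hwit : ∀ j, j ≠ i → A j ≠ ∅ →
      ∃ gj, SDge (v i) S (A i) ((A j).erase gj) ∧ v i gj ≤ v i g)
    (hg' : g' ∈ S) (j : Fin n) :
    (A j ∩ topSet (v i) S g').card ≤ (insert g (A i) ∩ topSet (v i) S g').card := by
  obtain rfl | hji := eq_or_ne j i
  · exact card_le_card (inter_subset_inter_right (subset_insert _ _))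
  by_cases hj : A j = ∅
  · simp [hj]
  obtain ⟨gj, hsdj, hgjg⟩ := hwit j hji hj
  obtain ⟨hgS, hgi⟩ := mem_sdiff.1 hg
  exact card_inter_le_card_insert_inter_of_card_erase_inter_le hgi
    (fun hgj => mem_topSet_of_le hgj hgS hgjg) (hsdj g' hg')

end

theorem sdprop1_of_sdef1_general
    {G : Type*} [DecidableEq G] (n : ℕ)
    (S : Finset G) (v : Fin n → G → ℝ)
    (A : Fin n → Finset G) (hA : IsAlloc n S A)
    (hsd : SDEF1 n v S A) :
    SDPROP1 n v S A := by
  intro i hi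
  obtain ⟨g, hg, hwit⟩ := hsd.exists_witness_le hA hi
  refine ⟨g, hg, fun g' hg' => Nat.ceil_div_le_of_le_mul i.pos ?_⟩
  calc (topSet (v i) S g').card
      = ∑ j, (A j ∩ topSet (v i) S g').card := hA.card_eq_sum_card_inter (filter_subset _ _)
    _ ≤ ∑ _j : Fin n, (insert g (A i) ∩ topSet (v i) S g').card :=
        sum_le_sum fun j _ => card_inter_topSet_le_of_witness_le hg hwit hg' j
    _ = n * (insert g (A i) ∩ topSet (v i) S g').card := by simp

/-- Every SD-EF1 allocation is SD-PROP1. -/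
theorem sdprop1_of_sdef1
    {G : Type*} [DecidableEq G] (n : ℕ) (hn : 0 < n)
    (S : Finset G) (v : Fin n → G → ℝ)
    (hv : ∀ i : Fin n, ∀ g ∈ S, 0 ≤ v i g)
    (A : Fin n → Finset G) (hA : IsAlloc n S A)
    (hsd : SDEF1 n v S A) :
    SDPROP1 n v S A :=
  sdprop1_of_sdef1_general n S v A hA hsd
end
end

section
/- If an allocation A of a finite set of goods S among n agents with additive nonnegative valuations is SD-PROP1, then A is PROP1; that is, for every agent i with A_i ≠ S there exists g ∈ S \ A_i such that v_i(A_i ∪ {g}) ≥ v_i(S)/n. -/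
open Finset
open scoped Classical

noncomputable section

/-- Total value of a bundle `X` under additive valuation `v`. -/
def totalVal {G : Type*} (v : G → ℝ) (X : Finset G) : ℝ := ∑ g ∈ X, v g

/-- The allocation `A` of goods `S` is PROP1. -/
def PROP1 {G : Type*} [DecidableEq G] (n : ℕ) (v : Fin n → G → ℝ) (S : Finset G)
    (A : Fin n → Finset G) : Prop :=
  ∀ i : Fin n, A i ≠ S → ∃ g ∈ S \ A i, totalVal (v i) S / n ≤ totalVal (v i) (insert g (A i))

lemma key_sum {G : Type*} [DecidableEq G] (n : ℕ) :
    ∀ (m : ℕ) (S : Finset G), S.card ≤ m → ∀ (v : G → ℝ) (B : Finset G), B ⊆ S →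
      (∀ x ∈ S, 0 ≤ v x) →
      (∀ g' ∈ S, ((topSet v S g').card : ℝ) ≤ n * ((B ∩ topSet v S g').card : ℝ)) →
      ∑ x ∈ S, v x ≤ n * ∑ x ∈ B, v x := by
  intro m
  induction m with
  | zero =>
    intro S hS v B hBS hv hcond
    have hSe : S = ∅ := Finset.card_eq_zero.mp (Nat.le_zero.mp hS)
    subst hSe
    simp [Finset.subset_empty.mp hBS]
  | succ m ih =>
    intro S hS v B hBS hv hcond
    rcases S.eq_empty_or_nonempty with rfl | hne
    · simp [Finset.subset_empty.mp hBS]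
    obtain ⟨g0, hg0S, hg0min⟩ := S.exists_min_image v hne
    set t := v g0 with ht
    have ht0 : 0 ≤ t := hv g0 hg0S
    set S' := S.filter (fun x => t < v x) with hS'def
    set B' := B.filter (fun x => t < v x) with hB'def
    have hS'sub : S' ⊆ S := Finset.filter_subset _ _
    have hg0notS' : g0 ∉ S' := by simp [hS'def, ht]
    have hS'card : S'.card ≤ m := by
      have : S'.card < S.card :=
        Finset.card_lt_card ⟨hS'sub, fun h => hg0notS' (h hg0S)⟩
      omega
    have hB'S' : B' ⊆ S' := by
      intro x hx
      simp only [hB'def, Finset.mem_filter] at hx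
      exact Finset.mem_filter.mpr ⟨hBS hx.1, hx.2⟩
    -- topSet for shifted valuation on S' equals topSet on S
    have htop : ∀ g' ∈ S', topSet (fun x => v x - t) S' g' = topSet v S g' := by
      intro g' hg'
      have hg't : t < v g' := (Finset.mem_filter.mp hg').2
      ext x
      simp only [topSet, Finset.mem_filter, hS'def]
      constructor
      · rintro ⟨⟨hxS, _⟩, hle⟩
        exact ⟨hxS, by linarith⟩
      · rintro ⟨hxS, hle⟩
        exact ⟨⟨hxS, lt_of_lt_of_le hg't hle⟩, by linarith⟩
    have hBtop : ∀ g' ∈ S', B' ∩ topSet v S g' = B ∩ topSet v S g' := by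
      intro g' hg'
      have hg't : t < v g' := (Finset.mem_filter.mp hg').2
      ext x
      simp only [Finset.mem_inter, hB'def, Finset.mem_filter, topSet]
      constructor
      · rintro ⟨⟨hxB, _⟩, h2⟩
        exact ⟨hxB, h2⟩
      · rintro ⟨hxB, hxS, hle⟩
        exact ⟨⟨hxB, lt_of_lt_of_le hg't hle⟩, hxS, hle⟩
    have hIH : ∑ x ∈ S', (v x - t) ≤ n * ∑ x ∈ B', (v x - t) := by
      apply ih S' hS'card _ B' hB'S'
      · intro x hx
        have := (Finset.mem_filter.mp hx).2
        linarith
      · intro g' hg'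
        rw [htop g' hg', hBtop g' hg']
        exact hcond g' (hS'sub hg')
    -- sums over filtered sets equal full sums for the shifted valuation
    have hsumS : ∑ x ∈ S', (v x - t) = ∑ x ∈ S, (v x - t) := by
      rw [hS'def]
      apply Finset.sum_filter_of_ne
      intro x hx hne0
      have := hg0min x hx
      rcases lt_or_eq_of_le this with h | h
      · exact h
      · exact absurd (by rw [← h]; ring) hne0
    have hsumB : ∑ x ∈ B', (v x - t) = ∑ x ∈ B, (v x - t) := by
      rw [hB'def]
      apply Finset.sum_filter_of_ne
      intro x hx hne0
      have := hg0min x (hBS hx)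
      rcases lt_or_eq_of_le this with h | h
      · exact h
      · exact absurd (by rw [← h]; ring) hne0
    have hSexp : ∑ x ∈ S, (v x - t) = (∑ x ∈ S, v x) - t * S.card := by
      rw [Finset.sum_sub_distrib, Finset.sum_const, nsmul_eq_mul, mul_comm]
    have hBexp : ∑ x ∈ B, (v x - t) = (∑ x ∈ B, v x) - t * B.card := by
      rw [Finset.sum_sub_distrib, Finset.sum_const, nsmul_eq_mul, mul_comm]
    -- cardinality inequality from the minimum element
    have hcard : (S.card : ℝ) ≤ n * B.card := by
      have htopS : topSet v S g0 = S := by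
        rw [topSet]
        apply Finset.filter_true_of_mem
        intro x hx
        exact hg0min x hx
      have := hcond g0 hg0S
      rwa [htopS, Finset.inter_eq_left.mpr hBS] at this
    have htS : t * (S.card : ℝ) ≤ t * (n * B.card) :=
      mul_le_mul_of_nonneg_left hcard ht0
    rw [hsumS, hsumB, hSexp, hBexp] at hIH
    nlinarith [hIH, htS]

lemma ceil_card_le {n c b : ℕ} (hn : 0 < n) (h : Nat.ceil ((c : ℚ) / n) ≤ b) :
    (c : ℝ) ≤ n * b := by
  have h1 : (c : ℚ) / n ≤ (b : ℚ) := le_trans (Nat.le_ceil _) (by exact_mod_cast h)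
  have hn' : (0 : ℚ) < n := by exact_mod_cast hn
  have h2 : (c : ℚ) ≤ n * b := by
    rw [div_le_iff₀ hn'] at h1
    linarith [h1]
  exact_mod_cast h2

/-- Every SD-PROP1 allocation is PROP1. -/
theorem prop1_of_sdprop1
    {G : Type*} [DecidableEq G] (n : ℕ) (hn : 0 < n)
    (S : Finset G) (v : Fin n → G → ℝ)
    (hv : ∀ i : Fin n, ∀ g ∈ S, 0 ≤ v i g)
    (A : Fin n → Finset G) (hA : IsAlloc n S A)
    (hsd : SDPROP1 n v S A) :
    PROP1 n v S A := by
  intro i hi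
  obtain ⟨g, hg, hcond⟩ := hsd i hi
  refine ⟨g, hg, ?_⟩
  have hAiS : A i ⊆ S := by
    intro x hx
    rw [← hA.2]
    simp only [Finset.mem_biUnion]
    exact ⟨i, Finset.mem_univ i, hx⟩
  have hgS : g ∈ S := (Finset.mem_sdiff.mp hg).1
  have hBS : insert g (A i) ⊆ S := Finset.insert_subset hgS hAiS
  have hmain : totalVal (v i) S ≤ n * totalVal (v i) (insert g (A i)) := by
    apply key_sum n S.card S le_rfl (v i) _ hBS (hv i)
    intro g' hg'
    exact ceil_card_le hn (hcond g' hg')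
  have hn' : (0 : ℝ) < n := by exact_mod_cast hn
  rw [div_le_iff₀ hn']
  linarith [hmain]
end
end

section
/- Given two agents with additive nonnegative valuations over a finite set of goods M and a laminar set family L over M, there exists an allocation A of M that is Laminar EF1 with respect to L, i.e., the induced allocation A_S is EF1 as an allocation of S for every S ∈ L. -/
open Finset
open scoped Classical

noncomputable section

/-- The allocation `A` is EF1 (envy-free up to one good). -/
def EF1 {G : Type*} [DecidableEq G] (n : ℕ) (v : Fin n → G → ℝ)
    (A : Fin n → Finset G) : Prop :=
  ∀ i j : Fin n, A j ≠ ∅ → ∃ g ∈ A j, totalVal (v i) ((A j).erase g) ≤ totalVal (v i) (A i)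

set_option linter.unusedSectionVars false

namespace LamEF1

variable {G : Type*} [DecidableEq G]

/-- One-sided EF1 condition: the owner of `B` (with valuation `u`) does not envy
bundle `C` up to one good. -/
def EF1pair (u : G → ℝ) (B C : Finset G) : Prop :=
  C.Nonempty → ∃ g ∈ C, totalVal u (C.erase g) ≤ totalVal u B

/-- `X` is a good partition for the family `L` over `M`. -/
def GoodAlloc (v0 v1 : G → ℝ) (L : Finset (Finset G)) (M X : Finset G) : Prop :=
  X ⊆ M ∧ ∀ S ∈ L, EF1pair v0 (X ∩ S) (S \ X) ∧ EF1pair v1 (S \ X) (X ∩ S)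

lemma totalVal_nonneg {u : G → ℝ} {B : Finset G} (h : ∀ g ∈ B, 0 ≤ u g) :
    0 ≤ totalVal u B := Finset.sum_nonneg h

lemma totalVal_erase {u : G → ℝ} {B : Finset G} {g : G} (hg : g ∈ B) :
    totalVal u (B.erase g) = totalVal u B - u g := Finset.sum_erase_eq_sub hg

lemma totalVal_insert {u : G → ℝ} {B : Finset G} {a : G} (ha : a ∉ B) :
    totalVal u (insert a B) = totalVal u B + u a := by
  rw [totalVal, Finset.sum_insert ha, totalVal]; ring

lemma totalVal_congr {u u' : G → ℝ} {B : Finset G} (h : ∀ g ∈ B, u g = u' g) :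
    totalVal u B = totalVal u' B := Finset.sum_congr rfl h

lemma totalVal_empty (u : G → ℝ) : totalVal u (∅ : Finset G) = 0 := Finset.sum_empty

lemma totalVal_update_mem {u : G → ℝ} {B : Finset G} {z : G} (hz : z ∈ B) (c : ℝ) :
    totalVal (Function.update u z c) B = totalVal u B - u z + c := by
  rw [totalVal, Finset.sum_update_of_mem hz, ← Finset.erase_eq,
    Finset.sum_erase_eq_sub hz (f := u), totalVal]
  ring

lemma totalVal_update_not_mem {u : G → ℝ} {B : Finset G} {z : G} (hz : z ∉ B) (c : ℝ) :
    totalVal (Function.update u z c) B = totalVal u B := by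
  apply totalVal_congr
  intro g hg
  have : g ≠ z := fun h => hz (h ▸ hg)
  exact Function.update_of_ne this _ _

/-- singleton-or-empty bundles: the EF1 pair condition is automatic. -/
lemma EF1pair_of_small {u : G → ℝ} {B C : Finset G} (hC : C.card ≤ 1)
    (hB : 0 ≤ totalVal u B) : EF1pair u B C := by
  rintro ⟨a, ha⟩
  refine ⟨a, ha, ?_⟩
  have hCa : C = {a} := by
    apply Finset.eq_singleton_iff_unique_mem.mpr
    refine ⟨ha, fun b hb => ?_⟩
    by_contra hba
    have : 1 < C.card := Finset.one_lt_card.mpr ⟨b, hb, a, ha, hba⟩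
    omega
  rw [hCa, Finset.erase_singleton, totalVal_empty]
  exact hB

lemma EF1pair_congr {u u' : G → ℝ} {B C : Finset G}
    (hB : ∀ g ∈ B, u g = u' g) (hC : ∀ g ∈ C, u g = u' g)
    (h : EF1pair u' B C) : EF1pair u B C := by
  intro hne
  obtain ⟨g, hg, hineq⟩ := h hne
  refine ⟨g, hg, ?_⟩
  rw [totalVal_congr (fun a ha => hC a (Finset.erase_subset _ _ ha)),
    totalVal_congr hB]
  exact hineq

/-- Both EF1 pair conditions hold for any small `S`. -/
lemma cond_of_small {v0 v1 : G → ℝ} {M S X : Finset G} (hS : S.card ≤ 1) (hSM : S ⊆ M)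
    (h0 : ∀ g ∈ M, 0 ≤ v0 g) (h1 : ∀ g ∈ M, 0 ≤ v1 g) :
    EF1pair v0 (X ∩ S) (S \ X) ∧ EF1pair v1 (S \ X) (X ∩ S) := by
  constructor
  · exact EF1pair_of_small (le_trans (Finset.card_le_card (Finset.sdiff_subset)) hS)
      (totalVal_nonneg fun g hg => h0 g (hSM (Finset.mem_of_mem_inter_right hg)))
  · exact EF1pair_of_small (le_trans (Finset.card_le_card (Finset.inter_subset_right)) hS)
      (totalVal_nonneg fun g hg => h1 g (hSM (Finset.mem_sdiff.1 hg).1))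

lemma erase_inter_erase (a : G) (S T : Finset G) :
    S.erase a ∩ T.erase a = (S ∩ T).erase a := by
  ext g
  simp only [Finset.mem_inter, Finset.mem_erase]
  tauto

lemma laminar_image_erase {L : Finset (Finset G)}
    (hlam : ∀ S ∈ L, ∀ T ∈ L, S ∩ T = ∅ ∨ S ⊆ T ∨ T ⊆ S) (a : G) :
    ∀ S' ∈ L.image (fun S => S.erase a), ∀ T' ∈ L.image (fun S => S.erase a),
      S' ∩ T' = ∅ ∨ S' ⊆ T' ∨ T' ⊆ S' := by
  intro S' hS' T' hT'
  obtain ⟨S, hS, rfl⟩ := Finset.mem_image.1 hS'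
  obtain ⟨T, hT, rfl⟩ := Finset.mem_image.1 hT'
  rcases hlam S hS T hT with h | h | h
  · left; rw [erase_inter_erase, h, Finset.erase_empty]
  · right; left; exact Finset.erase_subset_erase _ h
  · right; right; exact Finset.erase_subset_erase _ h

end LamEF1

namespace LamEF1

variable {G : Type*} [DecidableEq G]

lemma inter_erase_right {X S : Finset G} {a : G} (ha : a ∉ X) :
    X ∩ S.erase a = X ∩ S := by
  ext g
  simp only [Finset.mem_inter, Finset.mem_erase]
  constructor
  · rintro ⟨hX, _, hS⟩; exact ⟨hX, hS⟩
  · rintro ⟨hX, hS⟩; exact ⟨hX, fun h => ha (h ▸ hX), hS⟩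

lemma sdiff_insert_not_mem {S X : Finset G} {a : G} (ha : a ∉ S) :
    S \ insert a X = S \ X := by
  ext g
  simp only [Finset.mem_sdiff, Finset.mem_insert]
  constructor
  · rintro ⟨hS, h⟩; exact ⟨hS, fun hX => h (Or.inr hX)⟩
  · rintro ⟨hS, h⟩
    exact ⟨hS, by rintro (rfl | hX); exacts [ha hS, h hX]⟩

/-- Case A step: `x`, `y` form a non-dominating pair in a minimal set. -/
lemma stepA (n : ℕ)
    (IH : ∀ M : Finset G, M.card ≤ n → ∀ v0 v1 : G → ℝ,
      (∀ g ∈ M, 0 ≤ v0 g) → (∀ g ∈ M, 0 ≤ v1 g) →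
      ∀ L : Finset (Finset G), (∀ S ∈ L, S ⊆ M) →
      (∀ S ∈ L, ∀ T ∈ L, S ∩ T = ∅ ∨ S ⊆ T ∨ T ⊆ S) →
      ∃ X, GoodAlloc v0 v1 L M X)
    (M : Finset G) (hM : M.card ≤ n + 1)
    (v0 v1 : G → ℝ) (h0 : ∀ g ∈ M, 0 ≤ v0 g) (h1 : ∀ g ∈ M, 0 ≤ v1 g)
    (L : Finset (Finset G)) (hsub : ∀ S ∈ L, S ⊆ M)
    (hlam : ∀ S ∈ L, ∀ T ∈ L, S ∩ T = ∅ ∨ S ⊆ T ∨ T ⊆ S)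
    (x y : G) (hxM : x ∈ M) (hyM : y ∈ M) (hxy : x ≠ y)
    (hv0 : v0 y ≤ v0 x) (hv1 : v1 x ≤ v1 y)
    (hstr : ∀ S ∈ L, (x ∈ S ∨ y ∈ S) → S.card ≤ 1 ∨ (x ∈ S ∧ y ∈ S)) :
    ∃ X, GoodAlloc v0 v1 L M X := by
  classical
  set M' := (M.erase x).erase y with hM'def
  have hM'sub : M' ⊆ M := (Finset.erase_subset _ _).trans (Finset.erase_subset _ _)
  have hyMx : y ∈ M.erase x := Finset.mem_erase.2 ⟨hxy.symm, hyM⟩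
  have hM'card : M'.card ≤ n := by
    have h1c : (M.erase x).card = M.card - 1 := Finset.card_erase_of_mem hxM
    have h2c : M'.card = (M.erase x).card - 1 := Finset.card_erase_of_mem hyMx
    have : 1 ≤ M.card := Finset.card_pos.2 ⟨x, hxM⟩
    omega
  have hxM' : x ∉ M' := fun h => (Finset.mem_erase.1 ((Finset.mem_erase.1 h).2)).1 rfl
  have hyM' : y ∉ M' := fun h => (Finset.mem_erase.1 h).1 rfl
  set L' := L.image (fun S => (S.erase x).erase y) with hL'def
  have hsub' : ∀ S' ∈ L', S' ⊆ M' := by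
    intro S' hS'
    obtain ⟨S, hS, rfl⟩ := Finset.mem_image.1 hS'
    exact Finset.erase_subset_erase _ (Finset.erase_subset_erase _ (hsub S hS))
  have hlam' : ∀ S' ∈ L', ∀ T' ∈ L', S' ∩ T' = ∅ ∨ S' ⊆ T' ∨ T' ⊆ S' := by
    have h1 := laminar_image_erase hlam x
    have h2 := laminar_image_erase h1 y
    intro S' hS' T' hT'
    have : L' = (L.image (fun S => S.erase x)).image (fun S => S.erase y) := by
      rw [hL'def, Finset.image_image]; rfl
    exact h2 S' (this ▸ hS') T' (this ▸ hT')
  obtain ⟨X', hX'sub, hX'⟩ := IH M' hM'card v0 v1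
    (fun g hg => h0 g (hM'sub hg)) (fun g hg => h1 g (hM'sub hg)) L' hsub' hlam'
  have hxX' : x ∉ X' := fun h => hxM' (hX'sub h)
  have hyX' : y ∉ X' := fun h => hyM' (hX'sub h)
  refine ⟨insert x X', ⟨Finset.insert_subset hxM (hX'sub.trans hM'sub), ?_⟩⟩
  intro S hS
  by_cases hcard : S.card ≤ 1
  · exact cond_of_small hcard (hsub S hS) h0 h1
  by_cases hxyS : x ∈ S ∨ y ∈ S
  case neg =>
    -- neither x nor y in S
    push_neg at hxyS
    obtain ⟨hxS, hyS⟩ := hxyS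
    have hSfix : (S.erase x).erase y = S := by
      rw [Finset.erase_eq_of_notMem hxS, Finset.erase_eq_of_notMem hyS]
    have hSL' : S ∈ L' := by
      rw [hL'def]
      exact hSfix ▸ Finset.mem_image_of_mem _ hS
    have hcond := hX' S hSL'
    have e1 : insert x X' ∩ S = X' ∩ S := Finset.insert_inter_of_notMem hxS
    have e2 : S \ insert x X' = S \ X' := sdiff_insert_not_mem hxS
    rw [e1, e2]
    exact hcond
  case pos =>
    obtain ⟨hxS, hyS⟩ := (hstr S hS hxyS).resolve_left hcard
    set S'' := (S.erase x).erase y with hS''def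
    have hS''L' : S'' ∈ L' := Finset.mem_image_of_mem _ hS
    have hxS'' : x ∉ S'' := fun h => (Finset.mem_erase.1 ((Finset.mem_erase.1 h).2)).1 rfl
    have hyS'' : y ∉ S'' := fun h => (Finset.mem_erase.1 h).1 rfl
    obtain ⟨hred0, hred1⟩ := hX' S'' hS''L'
    -- set identities
    have I1 : insert x X' ∩ S = insert x (X' ∩ S'') := by
      rw [Finset.insert_inter_of_mem hxS, hS''def, inter_erase_right hyX',
        inter_erase_right hxX']
    have I2 : S \ insert x X' = insert y (S'' \ X') := by
      ext g
      simp only [Finset.mem_sdiff, Finset.mem_insert, hS''def, Finset.mem_erase, not_or]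
      constructor
      · rintro ⟨hgS, hgx, hgX'⟩
        by_cases hgy : g = y
        · exact Or.inl hgy
        · exact Or.inr ⟨⟨hgy, hgx, hgS⟩, hgX'⟩
      · rintro (rfl | ⟨⟨hgy, hgx, hgS⟩, hgX'⟩)
        · exact ⟨hyS, hxy.symm, hyX'⟩
        · exact ⟨hgS, hgx, hgX'⟩
    have hxnotin : x ∉ X' ∩ S'' := fun h => hxX' (Finset.mem_of_mem_inter_left h)
    have hynotin : y ∉ S'' \ X' := fun h => hyS'' (Finset.mem_sdiff.1 h).1
    have hS''M : S'' ⊆ M := ((Finset.erase_subset _ _).trans (Finset.erase_subset _ _)).trans (hsub S hS)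
    constructor
    · -- EF1pair v0 (X∩S) (S\X)
      intro _
      by_cases hC : (S'' \ X').Nonempty
      · obtain ⟨h, hh, hineq⟩ := hred0 hC
        have hhy : h ≠ y := fun e => hynotin (e ▸ hh)
        refine ⟨h, I2 ▸ Finset.mem_insert_of_mem hh, ?_⟩
        have hhmem : h ∈ insert y (S'' \ X') := Finset.mem_insert_of_mem hh
        rw [I2, I1, totalVal_erase hhmem, totalVal_insert hynotin, totalVal_insert hxnotin]
        rw [totalVal_erase hh] at hineq
        linarith
      · have hempty : S'' \ X' = ∅ := Finset.not_nonempty_iff_eq_empty.1 hC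
        refine ⟨y, I2 ▸ Finset.mem_insert_self y _, ?_⟩
        rw [I2, hempty, Finset.erase_insert (Finset.notMem_empty _), totalVal_empty]
        apply totalVal_nonneg
        intro g hg
        exact h0 g ((hsub S hS) (Finset.mem_of_mem_inter_right hg))
    · -- EF1pair v1 (S\X) (X∩S)
      intro _
      by_cases hC : (X' ∩ S'').Nonempty
      · obtain ⟨h, hh, hineq⟩ := hred1 hC
        have hhx : h ≠ x := fun e => hxnotin (e ▸ hh)
        refine ⟨h, I1 ▸ Finset.mem_insert_of_mem hh, ?_⟩
        have hhmem : h ∈ insert x (X' ∩ S'') := Finset.mem_insert_of_mem hh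
        rw [I1, I2, totalVal_erase hhmem, totalVal_insert hynotin, totalVal_insert hxnotin]
        rw [totalVal_erase hh] at hineq
        linarith
      · have hempty : X' ∩ S'' = ∅ := Finset.not_nonempty_iff_eq_empty.1 hC
        refine ⟨x, I1 ▸ Finset.mem_insert_self x _, ?_⟩
        rw [I1, hempty, Finset.erase_insert (Finset.notMem_empty _), totalVal_empty]
        apply totalVal_nonneg
        intro g hg
        exact h1 g ((hsub S hS) (Finset.mem_sdiff.1 hg).1)

end LamEF1

namespace LamEF1

variable {G : Type*} [DecidableEq G]

/-- Case B step: `z1` dominates `z2` in both valuations; merge `z2` into `z1`. -/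
lemma stepB (n : ℕ)
    (IH : ∀ M : Finset G, M.card ≤ n → ∀ v0 v1 : G → ℝ,
      (∀ g ∈ M, 0 ≤ v0 g) → (∀ g ∈ M, 0 ≤ v1 g) →
      ∀ L : Finset (Finset G), (∀ S ∈ L, S ⊆ M) →
      (∀ S ∈ L, ∀ T ∈ L, S ∩ T = ∅ ∨ S ⊆ T ∨ T ⊆ S) →
      ∃ X, GoodAlloc v0 v1 L M X)
    (M : Finset G) (hM : M.card ≤ n + 1)
    (v0 v1 : G → ℝ) (h0 : ∀ g ∈ M, 0 ≤ v0 g) (h1 : ∀ g ∈ M, 0 ≤ v1 g)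
    (L : Finset (Finset G)) (hsub : ∀ S ∈ L, S ⊆ M)
    (hlam : ∀ S ∈ L, ∀ T ∈ L, S ∩ T = ∅ ∨ S ⊆ T ∨ T ⊆ S)
    (z1 z2 : G) (hz1M : z1 ∈ M) (hz2M : z2 ∈ M) (hz : z1 ≠ z2)
    (hd0 : v0 z2 ≤ v0 z1) (hd1 : v1 z2 ≤ v1 z1)
    (hstr : ∀ S ∈ L, (z1 ∈ S ∨ z2 ∈ S) → S.card ≤ 1 ∨ (z1 ∈ S ∧ z2 ∈ S)) :
    ∃ X, GoodAlloc v0 v1 L M X := by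
  classical
  set M' := M.erase z2 with hM'def
  have hM'sub : M' ⊆ M := Finset.erase_subset _ _
  have hM'card : M'.card ≤ n := by
    have hc1 : M'.card = M.card - 1 := Finset.card_erase_of_mem hz2M
    have hc2 : 1 ≤ M.card := Finset.card_pos.2 ⟨z2, hz2M⟩
    omega
  have hz2M' : z2 ∉ M' := fun h => (Finset.mem_erase.1 h).1 rfl
  have hz1M' : z1 ∈ M' := Finset.mem_erase.2 ⟨hz, hz1M⟩
  set v0' := Function.update v0 z1 (v0 z1 - v0 z2) with hv0'def
  set v1' := Function.update v1 z1 (v1 z1 - v1 z2) with hv1'def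
  have hupd0 : ∀ g : G, g ≠ z1 → v0' g = v0 g := fun g hg => Function.update_of_ne hg _ _
  have hupd1 : ∀ g : G, g ≠ z1 → v1' g = v1 g := fun g hg => Function.update_of_ne hg _ _
  have h0' : ∀ g ∈ M', 0 ≤ v0' g := by
    intro g hg
    by_cases hgz : g = z1
    · subst hgz; rw [hv0'def, Function.update_self]; linarith
    · rw [hupd0 g hgz]; exact h0 g (hM'sub hg)
  have h1' : ∀ g ∈ M', 0 ≤ v1' g := by
    intro g hg
    by_cases hgz : g = z1
    · subst hgz; rw [hv1'def, Function.update_self]; linarith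
    · rw [hupd1 g hgz]; exact h1 g (hM'sub hg)
  set L' := L.image (fun S => S.erase z2) with hL'def
  have hsub' : ∀ S' ∈ L', S' ⊆ M' := by
    intro S' hS'
    obtain ⟨S, hS, rfl⟩ := Finset.mem_image.1 hS'
    exact Finset.erase_subset_erase _ (hsub S hS)
  have hlam' := laminar_image_erase hlam z2
  obtain ⟨X', hX'sub, hX'⟩ := IH M' hM'card v0' v1' h0' h1' L' hsub' hlam'
  have hz2X' : z2 ∉ X' := fun h => hz2M' (hX'sub h)
  set X := if z1 ∈ X' then X' else insert z2 X' with hXdef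
  have hXsub : X ⊆ M := by
    rw [hXdef]
    split
    · exact hX'sub.trans hM'sub
    · exact Finset.insert_subset hz2M (hX'sub.trans hM'sub)
  refine ⟨X, hXsub, ?_⟩
  intro S hS
  by_cases hcard : S.card ≤ 1
  · exact cond_of_small hcard (hsub S hS) h0 h1
  by_cases hzS : z1 ∈ S ∨ z2 ∈ S
  case neg =>
    push_neg at hzS
    obtain ⟨hz1S, hz2S⟩ := hzS
    have hSL' : S ∈ L' := by
      rw [hL'def]
      exact (Finset.erase_eq_of_notMem hz2S) ▸ Finset.mem_image_of_mem _ hS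
    obtain ⟨hc0, hc1⟩ := hX' S hSL'
    have e1 : X ∩ S = X' ∩ S := by
      rw [hXdef]; split
      · rfl
      · exact Finset.insert_inter_of_notMem hz2S
    have e2 : S \ X = S \ X' := by
      rw [hXdef]; split
      · rfl
      · exact sdiff_insert_not_mem hz2S
    rw [e1, e2]
    have hagree : ∀ g ∈ S, v0 g = v0' g ∧ v1 g = v1' g := by
      intro g hg
      have hgz1 : g ≠ z1 := fun h => hz1S (h ▸ hg)
      exact ⟨(hupd0 g hgz1).symm, (hupd1 g hgz1).symm⟩
    constructor
    · exact EF1pair_congr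
        (fun g hg => (hagree g (Finset.mem_of_mem_inter_right hg)).1)
        (fun g hg => (hagree g (Finset.mem_sdiff.1 hg).1).1) hc0
    · exact EF1pair_congr
        (fun g hg => (hagree g (Finset.mem_sdiff.1 hg).1).2)
        (fun g hg => (hagree g (Finset.mem_of_mem_inter_right hg)).2) hc1
  case pos =>
    obtain ⟨hz1S, hz2S⟩ := (hstr S hS hzS).resolve_left hcard
    set S' := S.erase z2 with hS'def
    have hS'L' : S' ∈ L' := Finset.mem_image_of_mem _ hS
    have hz2S' : z2 ∉ S' := fun h => (Finset.mem_erase.1 h).1 rfl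
    have hz1S' : z1 ∈ S' := Finset.mem_erase.2 ⟨hz, hz1S⟩
    obtain ⟨hred0, hred1⟩ := hX' S' hS'L'
    have hSM := hsub S hS
    have hnn0 : 0 ≤ v0 z2 := h0 z2 hz2M
    have hnn1 : 0 ≤ v1 z2 := h1 z2 hz2M
    by_cases hz1X : z1 ∈ X'
    · -- z1 ∈ X' : X = X'
      have hXX : X = X' := by rw [hXdef, if_pos hz1X]
      have J1 : X' ∩ S' = X' ∩ S := inter_erase_right hz2X'
      have J2 : S \ X' = insert z2 (S' \ X') := by
        ext g
        simp only [Finset.mem_sdiff, Finset.mem_insert, hS'def, Finset.mem_erase]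
        constructor
        · rintro ⟨hgS, hgX⟩
          by_cases hgz : g = z2
          · exact Or.inl hgz
          · exact Or.inr ⟨⟨hgz, hgS⟩, hgX⟩
        · rintro (rfl | ⟨⟨hgz, hgS⟩, hgX⟩)
          · exact ⟨hz2S, hz2X'⟩
          · exact ⟨hgS, hgX⟩
      have hz1in : z1 ∈ X' ∩ S' := Finset.mem_inter.2 ⟨hz1X, hz1S'⟩
      have hz1out : z1 ∉ S' \ X' := fun h => (Finset.mem_sdiff.1 h).2 hz1X
      have hz2out : z2 ∉ S' \ X' := fun h => hz2S' (Finset.mem_sdiff.1 h).1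
      -- value identities
      have V1 : ∀ (u : G → ℝ) (u' : G → ℝ), u' = Function.update u z1 (u z1 - u z2) →
          totalVal u (X' ∩ S) = totalVal u' (X' ∩ S') + u z2 := by
        intro u u' hu'
        rw [← J1, hu', totalVal_update_mem hz1in]
        ring
      have V2 : ∀ (u : G → ℝ) (u' : G → ℝ), u' = Function.update u z1 (u z1 - u z2) →
          totalVal u (S \ X') = totalVal u' (S' \ X') + u z2 := by
        intro u u' hu'
        rw [J2, totalVal_insert hz2out, hu', totalVal_update_not_mem hz1out]
      have V10 := V1 v0 v0' hv0'def
      have V11 := V1 v1 v1' hv1'def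
      have V20 := V2 v0 v0' hv0'def
      have V21 := V2 v1 v1' hv1'def
      rw [hXX]
      constructor
      · -- EF1pair v0 (X'∩S) (S\X')
        intro _
        by_cases hC : (S' \ X').Nonempty
        · obtain ⟨h, hh, hineq⟩ := hred0 hC
          have hhz1 : h ≠ z1 := fun e => hz1out (e ▸ hh)
          have hhz2 : h ≠ z2 := fun e => hz2out (e ▸ hh)
          have hhmem : h ∈ S \ X' := J2 ▸ Finset.mem_insert_of_mem hh
          refine ⟨h, hhmem, ?_⟩
          rw [totalVal_erase hhmem, totalVal_erase hh] at *
          have hv : v0' h = v0 h := hupd0 h hhz1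
          linarith
        · have hempty : S' \ X' = ∅ := Finset.not_nonempty_iff_eq_empty.1 hC
          have hsing : S \ X' = {z2} := by rw [J2, hempty]; rfl
          refine ⟨z2, by rw [hsing]; exact Finset.mem_singleton_self z2, ?_⟩
          rw [hsing, Finset.erase_singleton, totalVal_empty]
          exact totalVal_nonneg fun g hg => h0 g (hSM (Finset.mem_of_mem_inter_right hg))
      · -- EF1pair v1 (S\X') (X'∩S)
        intro _
        obtain ⟨h, hh, hineq⟩ := hred1 ⟨z1, hz1in⟩
        have hhz2 : h ≠ z2 := fun e => hz2X' (e ▸ (Finset.mem_inter.1 hh).1)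
        have hhmem : h ∈ X' ∩ S := J1 ▸ hh
        refine ⟨h, hhmem, ?_⟩
        rw [totalVal_erase hhmem, totalVal_erase hh] at *
        by_cases hhz1 : h = z1
        · have hv : v1' h = v1 h - v1 z2 := by
            subst hhz1; rw [hv1'def]; exact Function.update_self _ _ _
          have hvv : v1 h = v1 z1 := by rw [hhz1]
          linarith
        · have hv : v1' h = v1 h := hupd1 h hhz1
          linarith
    · -- z1 ∉ X' : X = insert z2 X'
      have hXX : X = insert z2 X' := by rw [hXdef, if_neg hz1X]
      have K1 : X ∩ S = insert z2 (X' ∩ S') := by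
        rw [hXX, Finset.insert_inter_of_mem hz2S, inter_erase_right hz2X']
      have K2 : S \ X = S' \ X' := by
        rw [hXX]
        ext g
        simp only [Finset.mem_sdiff, Finset.mem_insert, hS'def, Finset.mem_erase, not_or]
        constructor
        · rintro ⟨hgS, hgz2, hgX⟩; exact ⟨⟨hgz2, hgS⟩, hgX⟩
        · rintro ⟨⟨hgz2, hgS⟩, hgX⟩; exact ⟨hgS, hgz2, hgX⟩
      have hz2in : z2 ∉ X' ∩ S' := fun h => hz2X' (Finset.mem_inter.1 h).1
      have hz1in : z1 ∈ S' \ X' := Finset.mem_sdiff.2 ⟨hz1S', hz1X⟩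
      have hz1out : z1 ∉ X' ∩ S' := fun h => hz1X (Finset.mem_inter.1 h).1
      have V1 : ∀ (u : G → ℝ) (u' : G → ℝ), u' = Function.update u z1 (u z1 - u z2) →
          totalVal u (X ∩ S) = totalVal u' (X' ∩ S') + u z2 := by
        intro u u' hu'
        rw [K1, totalVal_insert hz2in, hu', totalVal_update_not_mem hz1out]
      have V2 : ∀ (u : G → ℝ) (u' : G → ℝ), u' = Function.update u z1 (u z1 - u z2) →
          totalVal u (S \ X) = totalVal u' (S' \ X') + u z2 := by
        intro u u' hu'
        rw [K2, hu', totalVal_update_mem hz1in]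
        ring
      have V10 := V1 v0 v0' hv0'def
      have V11 := V1 v1 v1' hv1'def
      have V20 := V2 v0 v0' hv0'def
      have V21 := V2 v1 v1' hv1'def
      constructor
      · -- EF1pair v0 (X∩S) (S\X)
        intro _
        obtain ⟨h, hh, hineq⟩ := hred0 ⟨z1, hz1in⟩
        have hhz2 : h ≠ z2 := fun e => hz2S' (e ▸ (Finset.mem_sdiff.1 hh).1)
        have hhmem : h ∈ S \ X := K2 ▸ hh
        refine ⟨h, hhmem, ?_⟩
        rw [totalVal_erase hhmem, totalVal_erase hh] at *
        by_cases hhz1 : h = z1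
        · have hv : v0' h = v0 h - v0 z2 := by
            subst hhz1; rw [hv0'def]; exact Function.update_self _ _ _
          have hvv : v0 h = v0 z1 := by rw [hhz1]
          linarith
        · have hv : v0' h = v0 h := hupd0 h hhz1
          linarith
      · -- EF1pair v1 (S\X) (X∩S)
        intro _
        by_cases hC : (X' ∩ S').Nonempty
        · obtain ⟨h, hh, hineq⟩ := hred1 hC
          have hhz1 : h ≠ z1 := fun e => hz1out (e ▸ hh)
          have hhz2 : h ≠ z2 := fun e => hz2in (e ▸ hh)
          have hhmem : h ∈ X ∩ S := K1 ▸ Finset.mem_insert_of_mem hh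
          refine ⟨h, hhmem, ?_⟩
          rw [totalVal_erase hhmem, totalVal_erase hh] at *
          have hv : v1' h = v1 h := hupd1 h hhz1
          linarith
        · have hempty : X' ∩ S' = ∅ := Finset.not_nonempty_iff_eq_empty.1 hC
          have hsing : X ∩ S = {z2} := by rw [K1, hempty]; rfl
          refine ⟨z2, by rw [hsing]; exact Finset.mem_singleton_self z2, ?_⟩
          rw [hsing, Finset.erase_singleton, totalVal_empty]
          exact totalVal_nonneg fun g hg => h1 g (hSM (Finset.mem_sdiff.1 hg).1)

end LamEF1

namespace LamEF1

variable {G : Type*} [DecidableEq G]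

lemma exists_good : ∀ (n : ℕ) (M : Finset G), M.card ≤ n → ∀ v0 v1 : G → ℝ,
    (∀ g ∈ M, 0 ≤ v0 g) → (∀ g ∈ M, 0 ≤ v1 g) →
    ∀ L : Finset (Finset G), (∀ S ∈ L, S ⊆ M) →
    (∀ S ∈ L, ∀ T ∈ L, S ∩ T = ∅ ∨ S ⊆ T ∨ T ⊆ S) →
    ∃ X, GoodAlloc v0 v1 L M X := by
  intro n
  induction n with
  | zero =>
    intro M hM v0 v1 h0 h1 L hsub hlam
    refine ⟨M, Finset.Subset.refl M, fun S hS => ?_⟩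
    have : S.card ≤ 1 := by
      have := Finset.card_le_card (hsub S hS)
      omega
    exact cond_of_small this (hsub S hS) h0 h1
  | succ n IH =>
    intro M hM v0 v1 h0 h1 L hsub hlam
    by_cases hbig : ∃ S ∈ L, 2 ≤ S.card
    case neg =>
      push_neg at hbig
      refine ⟨M, Finset.Subset.refl M, fun S hS => ?_⟩
      exact cond_of_small (by have := hbig S hS; omega) (hsub S hS) h0 h1
    case pos =>
      obtain ⟨S₀, hS₀, hS₀c⟩ := hbig
      set Fam := L.filter (fun S => 2 ≤ S.card) with hFam
      have hFamne : Fam.Nonempty := ⟨S₀, Finset.mem_filter.2 ⟨hS₀, hS₀c⟩⟩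
      obtain ⟨W, hWFam, hWmin⟩ : ∃ W ∈ Fam, ∀ S ∈ Fam, ¬ S ⊂ W := by
        obtain ⟨W, hW, hmin⟩ := Finset.exists_min_image Fam Finset.card hFamne
        exact ⟨W, hW, fun S hS hlt => absurd (hmin S hS) (not_le.2 (Finset.card_lt_card hlt))⟩
      obtain ⟨hWL, hWc⟩ := Finset.mem_filter.1 hWFam
      obtain ⟨x, hxW, y, hyW, hxy⟩ := Finset.one_lt_card.1 (by omega : 1 < W.card)
      have hxM : x ∈ M := hsub W hWL hxW
      have hyM : y ∈ M := hsub W hWL hyW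
      have hstr : ∀ S ∈ L, (x ∈ S ∨ y ∈ S) → S.card ≤ 1 ∨ (x ∈ S ∧ y ∈ S) := by
        intro S hS hxyS
        by_cases hc : S.card ≤ 1
        · exact Or.inl hc
        right
        have hne : ¬ S ∩ W = ∅ := by
          intro h
          rcases hxyS with hxS | hyS
          · exact (Finset.eq_empty_iff_forall_notMem.1 h x) (Finset.mem_inter.2 ⟨hxS, hxW⟩)
          · exact (Finset.eq_empty_iff_forall_notMem.1 h y) (Finset.mem_inter.2 ⟨hyS, hyW⟩)
        rcases hlam S hS W hWL with h | h | h
        · exact absurd h hne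
        · have hSF : S ∈ Fam := Finset.mem_filter.2 ⟨hS, by omega⟩
          have : ¬ S ⊂ W := hWmin S hSF
          have hSW : S = W := by
            rcases lt_or_eq_of_le (le_iff_subset.2 h) with hlt | heq
            · exact absurd hlt this
            · exact heq
          rw [hSW]; exact ⟨hxW, hyW⟩
        · exact ⟨h hxW, h hyW⟩
      have hstr' : ∀ S ∈ L, (y ∈ S ∨ x ∈ S) → S.card ≤ 1 ∨ (y ∈ S ∧ x ∈ S) := by
        intro S hS h
        rcases hstr S hS h.symm with h' | h'
        · exact Or.inl h'
        · exact Or.inr ⟨h'.2, h'.1⟩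
      rcases le_total (v0 y) (v0 x) with e0 | e0 <;> rcases le_total (v1 y) (v1 x) with e1 | e1
      · -- x dominates y
        exact stepB n IH M hM v0 v1 h0 h1 L hsub hlam x y hxM hyM hxy e0 e1 hstr
      · -- non-dominating pair (x to agent 0, y to agent 1)
        exact stepA n IH M hM v0 v1 h0 h1 L hsub hlam x y hxM hyM hxy e0 e1 hstr
      · -- non-dominating pair (y to agent 0, x to agent 1)
        exact stepA n IH M hM v0 v1 h0 h1 L hsub hlam y x hyM hxM hxy.symm e0 e1 hstr'
      · -- y dominates x
        exact stepB n IH M hM v0 v1 h0 h1 L hsub hlam y x hyM hxM hxy.symm e0 e1 hstr'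

end LamEF1


/-- For two agents with additive nonnegative valuations over a finite
set of goods `M` and a laminar family `L` of subsets of `M`, there is an allocation of
`M` whose restriction to every member of `L` is EF1 (Laminar EF1). -/
theorem exists_laminar_ef1_two_agents
    {G : Type*} [DecidableEq G] (M : Finset G) (v : Fin 2 → G → ℝ)
    (hv : ∀ i : Fin 2, ∀ g ∈ M, 0 ≤ v i g)
    (L : Finset (Finset G))
    (hLsub : ∀ S ∈ L, S ⊆ M)
    (hlam : ∀ S ∈ L, ∀ T ∈ L, S ∩ T = ∅ ∨ S ⊆ T ∨ T ⊆ S) :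
    ∃ A : Fin 2 → Finset G,
      IsAlloc 2 M A ∧ ∀ S ∈ L, EF1 2 v (fun i => A i ∩ S) := by
  classical
  obtain ⟨X, hXsub, hX⟩ := LamEF1.exists_good M.card M le_rfl (v 0) (v 1)
    (hv 0) (hv 1) L hLsub hlam
  refine ⟨fun i => if i = 0 then X else M \ X, ?_, ?_⟩
  · constructor
    · intro i j hij
      fin_cases i <;> fin_cases j <;> simp_all
      · exact Finset.disjoint_sdiff
      · exact Finset.disjoint_sdiff.symm
    · ext g
      simp only [Finset.mem_biUnion, Finset.mem_univ, true_and]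
      constructor
      · rintro ⟨i, hi⟩
        by_cases h : i = 0
        · rw [h] at hi; simp only [if_pos rfl] at hi; exact hXsub hi
        · rw [if_neg h] at hi; exact (Finset.mem_sdiff.1 hi).1
      · intro hg
        by_cases h : g ∈ X
        · exact ⟨0, by simpa using h⟩
        · exact ⟨1, by simp [Finset.mem_sdiff, hg, h]⟩
  · intro S hS
    obtain ⟨hp0, hp1⟩ := hX S hS
    have hMS : (M \ X) ∩ S = S \ X := by
      ext g
      simp only [Finset.mem_inter, Finset.mem_sdiff]
      constructor
      · rintro ⟨⟨hgM, hgX⟩, hgS⟩; exact ⟨hgS, hgX⟩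
      · rintro ⟨hgS, hgX⟩; exact ⟨⟨hLsub S hS hgS, hgX⟩, hgS⟩
    have h1ne0 : (1 : Fin 2) ≠ 0 := by decide
    have htwo : ∀ i : Fin 2, i = 0 ∨ i = 1 := by decide
    intro i j hj
    rcases htwo i with rfl | rfl <;> rcases htwo j with rfl | rfl
    · -- (0,0)
      simp only [if_pos rfl] at hj ⊢
      obtain ⟨g, hg⟩ := Finset.nonempty_iff_ne_empty.2 hj
      refine ⟨g, hg, ?_⟩
      rw [LamEF1.totalVal_erase hg]
      have : 0 ≤ v 0 g := hv 0 g (hXsub (Finset.mem_of_mem_inter_left hg))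
      linarith
    · -- (0,1)
      simp only [if_pos rfl, if_neg h1ne0] at hj ⊢
      rw [hMS] at hj ⊢
      exact hp0 (Finset.nonempty_iff_ne_empty.2 hj)
    · -- (1,0)
      simp only [if_pos rfl, if_neg h1ne0] at hj ⊢
      rw [hMS]
      exact hp1 (Finset.nonempty_iff_ne_empty.2 hj)
    · -- (1,1)
      simp only [if_neg h1ne0] at hj ⊢
      obtain ⟨g, hg⟩ := Finset.nonempty_iff_ne_empty.2 hj
      refine ⟨g, hg, ?_⟩
      rw [LamEF1.totalVal_erase hg]
      have hgM : g ∈ M := (Finset.mem_sdiff.1 (Finset.mem_of_mem_inter_left hg)).1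
      have : 0 ≤ v 1 g := hv 1 g hgM
      linarith
end
end

section
/- For every temporal fair division instance with n = 2 agents, there exists an allocation A of M that is EFX per day and EF1 up to each day. -/
open Finset
open scoped Classical

noncomputable section

/-- The allocation `A` is EFX (envy-free up to any good). -/
def EFX {G : Type*} [DecidableEq G] (n : ℕ) (v : Fin n → G → ℝ)
    (A : Fin n → Finset G) : Prop :=
  ∀ i j : Fin n, ∀ g ∈ A j, totalVal (v i) ((A j).erase g) ≤ totalVal (v i) (A i)

/-- The union of the goods of the first days, up to and including day `t`. -/
def upTo {G : Type*} [DecidableEq G] {k : ℕ} (M : Fin k → Finset G) (t : Fin k) : Finset G :=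
  (Finset.Iic t).biUnion M

namespace TFD

set_option linter.unusedSectionVars false

variable {G : Type*} [DecidableEq G]

lemma tv_union {v : G → ℝ} {X Y : Finset G} (h : Disjoint X Y) :
    totalVal v (X ∪ Y) = totalVal v X + totalVal v Y := Finset.sum_union h

lemma tv_erase {v : G → ℝ} {X : Finset G} {g : G} (hg : g ∈ X) :
    totalVal v (X.erase g) = totalVal v X - v g := Finset.sum_erase_eq_sub hg

lemma tv_nonneg {v : G → ℝ} {X : Finset G} (h : ∀ g ∈ X, 0 ≤ v g) :
    0 ≤ totalVal v X := Finset.sum_nonneg h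

lemma tv_mono {v : G → ℝ} {X Y : Finset G} (hXY : X ⊆ Y) (h : ∀ g ∈ Y, 0 ≤ v g) :
    totalVal v X ≤ totalVal v Y :=
  Finset.sum_le_sum_of_subset_of_nonneg hXY (fun g hg _ => h g hg)

lemma tv_erase_le {v : G → ℝ} {X : Finset G} {g : G} (h : ∀ g ∈ X, 0 ≤ v g) :
    totalVal v (X.erase g) ≤ totalVal v X :=
  tv_mono (Finset.erase_subset _ _) h

lemma tv_sdiff {v : G → ℝ} {X S : Finset G} (h : X ⊆ S) :
    totalVal v (S \ X) = totalVal v S - totalVal v X := by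
  have := Finset.sum_sdiff (f := v) h
  unfold totalVal; linarith

/-- The leximin-type cut: a partition `(P, S\P)` of `S` with `P` the weakly larger side,
EFX from the larger side, and globally minimal imbalance. -/
lemma exists_cut (v : G → ℝ) (S : Finset G) (hv : ∀ g ∈ S, 0 ≤ v g) :
    ∃ P, P ⊆ S ∧ totalVal v (S \ P) ≤ totalVal v P ∧
      (∀ g ∈ P, totalVal v (P.erase g) ≤ totalVal v (S \ P)) ∧
      (∀ X ⊆ S, totalVal v P - totalVal v (S \ P) ≤ |totalVal v X - totalVal v (S \ X)|) := by
  classical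
  set F0 : Finset (Finset G) :=
    S.powerset.filter (fun X => totalVal v (S \ X) ≤ totalVal v X) with hF0
  have hSF0 : S ∈ F0 := by
    simp only [hF0, Finset.mem_filter, Finset.mem_powerset]
    refine ⟨le_refl S, ?_⟩
    rw [Finset.sdiff_self]
    have : totalVal v (∅ : Finset G) = 0 := by simp [totalVal]
    rw [this]
    exact tv_nonneg hv
  obtain ⟨X₁, hX₁F, hX₁min⟩ :=
    Finset.exists_min_image F0 (fun X => totalVal v X - totalVal v (S \ X)) ⟨S, hSF0⟩
  set d : ℝ := totalVal v X₁ - totalVal v (S \ X₁) with hd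
  set F1 : Finset (Finset G) :=
    F0.filter (fun X => totalVal v X - totalVal v (S \ X) = d) with hF1
  have hX₁F1 : X₁ ∈ F1 := by simp [hF1, hX₁F, hd]
  obtain ⟨P, hPF1, hPmin⟩ :=
    Finset.exists_min_image F1 (fun X => (X.card : ℕ)) ⟨X₁, hX₁F1⟩
  simp only [hF1, Finset.mem_filter] at hPF1
  obtain ⟨hPF0, hPd⟩ := hPF1
  simp only [hF0, Finset.mem_filter, Finset.mem_powerset] at hPF0
  obtain ⟨hPS, hPbal⟩ := hPF0
  have hd0 : 0 ≤ d := by rw [← hPd]; linarith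
  -- min over all subsets
  have hmin : ∀ X ⊆ S, d ≤ |totalVal v X - totalVal v (S \ X)| := by
    intro X hXS
    rcases le_total (totalVal v (S \ X)) (totalVal v X) with hc | hc
    · have hXF0 : X ∈ F0 := by simp [hF0, Finset.mem_filter, Finset.mem_powerset, hXS, hc]
      have := hX₁min X hXF0
      rw [abs_of_nonneg (by linarith)]
      linarith
    · have hXc : S \ X ∈ F0 := by
        have h1 : S \ (S \ X) = X := Finset.sdiff_sdiff_eq_self hXS
        simp only [hF0, Finset.mem_filter, Finset.mem_powerset]
        exact ⟨Finset.sdiff_subset, by rw [h1]; exact hc⟩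
      have := hX₁min _ hXc
      rw [Finset.sdiff_sdiff_eq_self hXS] at this
      rw [abs_of_nonpos (by linarith)]
      linarith
  refine ⟨P, hPS, by linarith [hPd], ?_, fun X hX => hPd ▸ hmin X hX⟩
  -- EFX property
  intro g hgP
  by_contra hcon
  push_neg at hcon
  have hgS : g ∈ S := hPS hgP
  have hvg : 0 ≤ v g := hv g hgS
  have herase : totalVal v (P.erase g) = totalVal v P - v g := tv_erase hgP
  rw [herase] at hcon
  have hvgd : v g < d := by rw [← hPd]; linarith
  set X' : Finset G := P.erase g with hX'
  have hX'S : X' ⊆ S := (Finset.erase_subset _ _).trans hPS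
  have hX'val : totalVal v X' = totalVal v P - v g := herase
  have hSX' : totalVal v (S \ X') = totalVal v (S \ P) + v g := by
    rw [tv_sdiff hX'S, tv_sdiff hPS, hX'val]; ring
  rcases eq_or_lt_of_le hvg with hzero | hpos
  · -- v g = 0 : contradiction with cardinality minimality
    have hX'F1 : X' ∈ F1 := by
      simp only [hF1, hF0, Finset.mem_filter, Finset.mem_powerset]
      refine ⟨⟨hX'S, ?_⟩, ?_⟩
      · rw [hSX', hX'val, ← hzero]; linarith
      · rw [hSX', hX'val, ← hzero, ← hPd]; ring
    have := hPmin X' hX'F1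
    have hcard : X'.card < P.card := Finset.card_erase_lt_of_mem hgP
    omega
  · -- v g > 0 : contradiction with imbalance minimality
    have := hmin X' hX'S
    rw [hX'val, hSX'] at this
    have habs : |totalVal v P - v g - (totalVal v (S \ P) + v g)| = |d - 2 * v g| := by
      rw [← hPd]; ring_nf
    rw [habs] at this
    rcases abs_cases (d - 2 * v g) with ⟨heq, _⟩ | ⟨heq, _⟩ <;> rw [heq] at this <;> linarith

end TFD

namespace TFD

set_option linter.unusedSectionVars false

variable {G : Type*} [DecidableEq G]

/-- goods of the first `t` days (`t` a natural number cutoff). -/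
def prefixSet {k : ℕ} (M : Fin k → Finset G) (t : ℕ) : Finset G :=
  (Finset.univ.filter (fun s : Fin k => (s : ℕ) < t)).biUnion M

def pairF (A1 A2 : Finset G) : Fin 2 → Finset G := fun i => if i = 0 then A1 else A2

@[simp] lemma pairF_zero (A1 A2 : Finset G) : pairF A1 A2 0 = A1 := rfl
@[simp] lemma pairF_one (A1 A2 : Finset G) : pairF A1 A2 1 = A2 := rfl

lemma prefixSet_zero {k : ℕ} (M : Fin k → Finset G) : prefixSet M 0 = ∅ := by
  simp [prefixSet]

lemma mem_prefixSet {k : ℕ} {M : Fin k → Finset G} {t : ℕ} {g : G} :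
    g ∈ prefixSet M t ↔ ∃ s : Fin k, (s : ℕ) < t ∧ g ∈ M s := by
  simp [prefixSet, Finset.mem_biUnion, Finset.mem_filter]

lemma prefixSet_subset {k : ℕ} (M : Fin k → Finset G) (t : ℕ) :
    prefixSet M t ⊆ Finset.univ.biUnion M := by
  intro g hg
  rw [mem_prefixSet] at hg
  obtain ⟨s, _, hgs⟩ := hg
  exact Finset.mem_biUnion.mpr ⟨s, Finset.mem_univ s, hgs⟩

lemma prefixSet_top {k : ℕ} (M : Fin k → Finset G) :
    prefixSet M k = Finset.univ.biUnion M := by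
  ext g
  rw [mem_prefixSet, Finset.mem_biUnion]
  exact ⟨fun ⟨s, _, h⟩ => ⟨s, Finset.mem_univ s, h⟩, fun ⟨s, _, h⟩ => ⟨s, s.isLt, h⟩⟩

lemma prefixSet_succ {k : ℕ} (M : Fin k → Finset G) {t : ℕ} {t' : Fin k} (ht : (t' : ℕ) = t) :
    prefixSet M (t + 1) = prefixSet M t ∪ M t' := by
  ext g
  rw [Finset.mem_union, mem_prefixSet, mem_prefixSet]
  constructor
  · rintro ⟨s, hs, hgs⟩
    rcases Nat.lt_or_ge (s : ℕ) t with h | h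
    · exact Or.inl ⟨s, h, hgs⟩
    · have : s = t' := Fin.ext (by omega)
      exact Or.inr (this ▸ hgs)
  · rintro (⟨s, hs, hgs⟩ | hg)
    · exact ⟨s, by omega, hgs⟩
    · exact ⟨t', by omega, hg⟩

lemma upTo_eq {k : ℕ} (M : Fin k → Finset G) (t' : Fin k) :
    upTo M t' = prefixSet M ((t' : ℕ) + 1) := by
  ext g
  rw [upTo, Finset.mem_biUnion, mem_prefixSet]
  constructor
  · rintro ⟨s, hs, hgs⟩
    rw [Finset.mem_Iic] at hs
    exact ⟨s, by omega, hgs⟩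
  · rintro ⟨s, hs, hgs⟩
    exact ⟨s, Finset.mem_Iic.mpr (by omega), hgs⟩

lemma disjoint_day_prefixSet {k : ℕ} {M : Fin k → Finset G}
    (hdisj : ∀ t t' : Fin k, t ≠ t' → Disjoint (M t) (M t'))
    {t : ℕ} {t' : Fin k} (ht : t ≤ (t' : ℕ)) :
    Disjoint (M t') (prefixSet M t) := by
  rw [prefixSet]
  rw [Finset.disjoint_biUnion_right]
  intro s hs
  rw [Finset.mem_filter] at hs
  exact hdisj t' s (by intro h; subst h; omega)

lemma disjoint_day_upTo {k : ℕ} {M : Fin k → Finset G}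
    (hdisj : ∀ t t' : Fin k, t ≠ t' → Disjoint (M t) (M t'))
    {s t' : Fin k} (h : (s : ℕ) < (t' : ℕ)) :
    Disjoint (M t') (upTo M s) := by
  rw [upTo, Finset.disjoint_biUnion_right]
  intro u hu
  rw [Finset.mem_Iic] at hu
  have : (u : ℕ) ≤ (s : ℕ) := hu
  exact hdisj t' u (by intro hh; subst hh; omega)

/-- The induction invariant: `(A1, A2)` partitions the first `t` days, is EFX on each of
those days, EF1 on each prefix among them, and EF1 overall. -/
def INV {k : ℕ} (M : Fin k → Finset G) (v : Fin 2 → G → ℝ) (t : ℕ)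
    (A1 A2 : Finset G) : Prop :=
  A1 ∪ A2 = prefixSet M t ∧ Disjoint A1 A2 ∧
  (∀ s : Fin k, (s : ℕ) < t → EFX 2 v (fun i => pairF A1 A2 i ∩ M s)) ∧
  (∀ s : Fin k, (s : ℕ) < t → EF1 2 v (fun i => pairF A1 A2 i ∩ upTo M s)) ∧
  EF1 2 v (pairF A1 A2)

lemma witness_easy {v : G → ℝ} {X Y : Finset G} (hX : X ≠ ∅) (hnn : ∀ g ∈ X, 0 ≤ v g)
    (h : totalVal v X ≤ totalVal v Y) :
    ∃ g ∈ X, totalVal v (X.erase g) ≤ totalVal v Y := by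
  obtain ⟨g, hg⟩ := Finset.nonempty_iff_ne_empty.mpr hX
  exact ⟨g, hg, le_trans (tv_erase_le hnn) h⟩

end TFD

namespace TFD

set_option linter.unusedSectionVars false
set_option maxHeartbeats 1000000

variable {G : Type*} [DecidableEq G]

lemma fin2 (i : Fin 2) : i = 0 ∨ i = 1 := by omega

/-- Step of type A: agent 1 cuts the day (EFX for agent 1 from `T2`'s side),
agent 2 receives her weakly preferred side `T2`.  Requires `e₁ ≤ 0`. -/
lemma stepA {k : ℕ} {M : Fin k → Finset G} {v : Fin 2 → G → ℝ}
    (hdisj : ∀ t t' : Fin k, t ≠ t' → Disjoint (M t) (M t'))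
    (hv : ∀ i : Fin 2, ∀ g ∈ Finset.univ.biUnion M, 0 ≤ v i g)
    {t : ℕ} (t' : Fin k) (ht : (t' : ℕ) = t)
    {T1 T2 : Finset G} (hT : T1 ∪ T2 = M t') (hTd : Disjoint T1 T2)
    (hpref : totalVal (v 1) T1 ≤ totalVal (v 1) T2)
    (hefx : ∀ g ∈ T2, totalVal (v 0) (T2.erase g) ≤ totalVal (v 0) T1)
    {A1 A2 : Finset G} (hI : INV M v t A1 A2)
    (hx : totalVal (v 0) A2 ≤ totalVal (v 0) A1) :
    INV M v (t + 1) (A1 ∪ T1) (A2 ∪ T2) ∧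
    totalVal (v 0) (A1 ∪ T1) = totalVal (v 0) A1 + totalVal (v 0) T1 ∧
    totalVal (v 0) (A2 ∪ T2) = totalVal (v 0) A2 + totalVal (v 0) T2 ∧
    totalVal (v 1) (A1 ∪ T1) = totalVal (v 1) A1 + totalVal (v 1) T1 ∧
    totalVal (v 1) (A2 ∪ T2) = totalVal (v 1) A2 + totalVal (v 1) T2 := by
  obtain ⟨hUn, hD, hEFX, hEF1, hcur⟩ := hI
  have hT1S : T1 ⊆ M t' := hT ▸ Finset.subset_union_left
  have hT2S : T2 ⊆ M t' := hT ▸ Finset.subset_union_right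
  have hA1P : A1 ⊆ prefixSet M t := hUn ▸ Finset.subset_union_left
  have hA2P : A2 ⊆ prefixSet M t := hUn ▸ Finset.subset_union_right
  have hday : Disjoint (M t') (prefixSet M t) := disjoint_day_prefixSet hdisj (by omega)
  have hT1A1 : Disjoint T1 A1 := (hday.mono hT1S hA1P)
  have hT1A2 : Disjoint T1 A2 := (hday.mono hT1S hA2P)
  have hT2A1 : Disjoint T2 A1 := (hday.mono hT2S hA1P)
  have hT2A2 : Disjoint T2 A2 := (hday.mono hT2S hA2P)
  -- nonnegativity on all relevant sets
  have hsubU : prefixSet M (t+1) ⊆ Finset.univ.biUnion M := prefixSet_subset M (t+1)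
  have hP1 : A1 ∪ T1 ⊆ prefixSet M (t+1) := by
    rw [prefixSet_succ M ht]
    exact Finset.union_subset_union hA1P hT1S
  have hP2 : A2 ∪ T2 ⊆ prefixSet M (t+1) := by
    rw [prefixSet_succ M ht]
    exact Finset.union_subset_union hA2P hT2S
  have hnn : ∀ (i : Fin 2) (X : Finset G), X ⊆ prefixSet M (t+1) → ∀ g ∈ X, 0 ≤ v i g :=
    fun i X hX g hg => hv i g (hsubU (hX hg))
  have hnnA1 : ∀ g ∈ A1, 0 ≤ v 0 g := hnn 0 _ (Finset.Subset.trans Finset.subset_union_left hP1)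
  have hnnT1u : ∀ g ∈ T1, 0 ≤ v 0 g := hnn 0 _ (Finset.Subset.trans Finset.subset_union_right hP1)
  have hnnT1w : ∀ g ∈ T1, 0 ≤ v 1 g := hnn 1 _ (Finset.Subset.trans Finset.subset_union_right hP1)
  have hnnT2u : ∀ g ∈ T2, 0 ≤ v 0 g := hnn 0 _ (Finset.Subset.trans Finset.subset_union_right hP2)
  have hnnT2w : ∀ g ∈ T2, 0 ≤ v 1 g := hnn 1 _ (Finset.Subset.trans Finset.subset_union_right hP2)
  have hnnA2w : ∀ g ∈ A2, 0 ≤ v 1 g := hnn 1 _ (Finset.Subset.trans Finset.subset_union_left hP2)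
  have hnnA2u : ∀ g ∈ A2, 0 ≤ v 0 g := hnn 0 _ (Finset.Subset.trans Finset.subset_union_left hP2)
  have hnnP1u : ∀ g ∈ A1 ∪ T1, 0 ≤ v 0 g := hnn 0 _ hP1
  have hnnP1w : ∀ g ∈ A1 ∪ T1, 0 ≤ v 1 g := hnn 1 _ hP1
  have hnnP2u : ∀ g ∈ A2 ∪ T2, 0 ≤ v 0 g := hnn 0 _ hP2
  have hnnP2w : ∀ g ∈ A2 ∪ T2, 0 ≤ v 1 g := hnn 1 _ hP2
  -- totalVal splittings
  have e11 : totalVal (v 0) (A1 ∪ T1) = totalVal (v 0) A1 + totalVal (v 0) T1 :=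
    tv_union hT1A1.symm
  have e12 : totalVal (v 0) (A2 ∪ T2) = totalVal (v 0) A2 + totalVal (v 0) T2 :=
    tv_union hT2A2.symm
  have e21 : totalVal (v 1) (A1 ∪ T1) = totalVal (v 1) A1 + totalVal (v 1) T1 :=
    tv_union hT1A1.symm
  have e22 : totalVal (v 1) (A2 ∪ T2) = totalVal (v 1) A2 + totalVal (v 1) T2 :=
    tv_union hT2A2.symm
  -- the new overall EF1
  have hcur' : EF1 2 v (pairF (A1 ∪ T1) (A2 ∪ T2)) := by
    intro i j hj
    rcases fin2 i with rfl | rfl <;> rcases fin2 j with rfl | rfl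
    · -- i = 0, j = 0
      simp only [pairF_zero] at hj ⊢
      exact witness_easy hj hnnP1u le_rfl
    · -- i = 0, j = 1 : agent 1 vs bundle of agent 2
      simp only [pairF_zero, pairF_one] at hj ⊢
      by_cases hT2e : T2 = ∅
      · subst hT2e
        refine witness_easy hj hnnP2u ?_
        have h0 : totalVal (v 0) (∅ : Finset G) = 0 := by simp [totalVal]
        have hT1nn : 0 ≤ totalVal (v 0) T1 := tv_nonneg hnnT1u
        rw [e12, e11, h0]
        linarith
      · obtain ⟨g, hg⟩ := Finset.nonempty_iff_ne_empty.mpr hT2e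
        refine ⟨g, Finset.mem_union_right _ hg, ?_⟩
        have hgA2 : g ∉ A2 := fun h => (Finset.disjoint_left.mp hT2A2) hg h
        have herw : (A2 ∪ T2).erase g = A2 ∪ T2.erase g := by
          rw [Finset.erase_union_distrib, Finset.erase_eq_of_notMem hgA2]
        rw [herw, e11]
        have hdis : Disjoint A2 (T2.erase g) := (hT2A2.symm).mono_right (Finset.erase_subset _ _)
        rw [tv_union hdis]
        have := hefx g hg
        linarith
    · -- i = 1, j = 0 : agent 2 vs bundle of agent 1
      simp only [pairF_zero, pairF_one] at hj ⊢
      by_cases hA1e : A1 = ∅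
      · subst hA1e
        rw [Finset.empty_union] at hj ⊢
        refine witness_easy hj hnnT1w ?_
        have hA2nn : 0 ≤ totalVal (v 1) A2 := tv_nonneg hnnA2w
        rw [e22]
        linarith
      · obtain ⟨g, hg, hgle⟩ := hcur 1 0 (by simpa using hA1e)
        simp only [pairF_zero, pairF_one] at hg hgle
        refine ⟨g, Finset.mem_union_left _ hg, ?_⟩
        have hgT1 : g ∉ T1 := fun h => (Finset.disjoint_left.mp hT1A1) h hg
        have herw : (A1 ∪ T1).erase g = A1.erase g ∪ T1 := by
          rw [Finset.erase_union_distrib, Finset.erase_eq_of_notMem hgT1]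
        rw [herw, e22]
        have hdis : Disjoint (A1.erase g) T1 := hT1A1.symm.mono_left (Finset.erase_subset _ _)
        rw [tv_union hdis]
        linarith
    · -- i = 1, j = 1
      simp only [pairF_one] at hj ⊢
      exact witness_easy hj hnnP2w le_rfl
  -- intersections with old days / prefixes
  have hinterOldDay : ∀ s : Fin k, (s : ℕ) < t →
      (fun i => pairF (A1 ∪ T1) (A2 ∪ T2) i ∩ M s) = (fun i => pairF A1 A2 i ∩ M s) := by
    intro s hs
    have hds : Disjoint (M t') (M s) := hdisj t' s (by intro h; subst h; omega)
    have h1 : T1 ∩ M s = ∅ := Finset.disjoint_iff_inter_eq_empty.mp (hds.mono_left hT1S)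
    have h2 : T2 ∩ M s = ∅ := Finset.disjoint_iff_inter_eq_empty.mp (hds.mono_left hT2S)
    funext i
    rcases fin2 i with rfl | rfl <;>
      simp only [pairF_zero, pairF_one, Finset.union_inter_distrib_right, h1, h2,
        Finset.union_empty]
  have hinterOldUp : ∀ s : Fin k, (s : ℕ) < t →
      (fun i => pairF (A1 ∪ T1) (A2 ∪ T2) i ∩ upTo M s) =
      (fun i => pairF A1 A2 i ∩ upTo M s) := by
    intro s hs
    have hds : Disjoint (M t') (upTo M s) := disjoint_day_upTo hdisj (by omega)
    have h1 : T1 ∩ upTo M s = ∅ := Finset.disjoint_iff_inter_eq_empty.mp (hds.mono_left hT1S)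
    have h2 : T2 ∩ upTo M s = ∅ := Finset.disjoint_iff_inter_eq_empty.mp (hds.mono_left hT2S)
    funext i
    rcases fin2 i with rfl | rfl <;>
      simp only [pairF_zero, pairF_one, Finset.union_inter_distrib_right, h1, h2,
        Finset.union_empty]
  refine ⟨⟨?_, ?_, ?_, ?_, hcur'⟩, e11, e12, e21, e22⟩
  · -- union
    rw [prefixSet_succ M ht, ← hUn, ← hT]
    ext g
    simp only [Finset.mem_union]
    tauto
  · -- disjoint
    rw [Finset.disjoint_union_left]
    constructor
    · rw [Finset.disjoint_union_right]
      exact ⟨hD, hT2A1.symm⟩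
    · rw [Finset.disjoint_union_right]
      exact ⟨hT1A2, hTd⟩
  · -- EFX per day
    intro s hs
    rcases Nat.lt_or_ge (s : ℕ) t with hlt | hge
    · rw [hinterOldDay s hlt]
      exact hEFX s hlt
    · -- s = t'
      have hseq : s = t' := Fin.ext (by omega)
      subst hseq
      have hfe : (fun i => pairF (A1 ∪ T1) (A2 ∪ T2) i ∩ M s) = pairF T1 T2 := by
        have h1 : A1 ∩ M s = ∅ :=
          Finset.disjoint_iff_inter_eq_empty.mp ((hday.mono_right hA1P).symm)
        have h2 : A2 ∩ M s = ∅ :=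
          Finset.disjoint_iff_inter_eq_empty.mp ((hday.mono_right hA2P).symm)
        funext i
        rcases fin2 i with rfl | rfl <;>
          simp only [pairF_zero, pairF_one, Finset.union_inter_distrib_right, h1, h2,
            Finset.empty_union, Finset.inter_eq_left.mpr hT1S, Finset.inter_eq_left.mpr hT2S]
      rw [hfe]
      intro i j g hg
      rcases fin2 i with rfl | rfl <;> rcases fin2 j with rfl | rfl
      · simp only [pairF_zero] at hg ⊢
        rw [tv_erase hg]
        have := hnnT1u g hg
        linarith
      · simp only [pairF_zero, pairF_one] at hg ⊢
        exact hefx g hg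
      · simp only [pairF_zero, pairF_one] at hg ⊢
        calc totalVal (v 1) (T1.erase g) ≤ totalVal (v 1) T1 := tv_erase_le hnnT1w
          _ ≤ totalVal (v 1) T2 := hpref
      · simp only [pairF_one] at hg ⊢
        rw [tv_erase hg]
        have := hnnT2w g hg
        linarith
  · -- EF1 up to each day
    intro s hs
    rcases Nat.lt_or_ge (s : ℕ) t with hlt | hge
    · rw [hinterOldUp s hlt]
      exact hEF1 s hlt
    · have hseq : s = t' := Fin.ext (by omega)
      subst hseq
      have hfe : (fun i => pairF (A1 ∪ T1) (A2 ∪ T2) i ∩ upTo M s) =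
          pairF (A1 ∪ T1) (A2 ∪ T2) := by
        have hup : upTo M s = prefixSet M (t + 1) := by rw [upTo_eq]; congr 1; omega
        funext i
        rcases fin2 i with rfl | rfl <;>
          simp only [pairF_zero, pairF_one, hup, Finset.inter_eq_left.mpr hP1,
            Finset.inter_eq_left.mpr hP2]
      rw [hfe]
      exact hcur'

end TFD

namespace TFD

set_option linter.unusedSectionVars false
set_option maxHeartbeats 1000000

variable {G : Type*} [DecidableEq G]

/-- Step of type B: agent 2 cuts the day (EFX for agent 2 from `T1`'s side),
agent 1 receives his weakly preferred side `T1`.  Requires `e₂ ≤ 0`. -/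
lemma stepB {k : ℕ} {M : Fin k → Finset G} {v : Fin 2 → G → ℝ}
    (hdisj : ∀ t t' : Fin k, t ≠ t' → Disjoint (M t) (M t'))
    (hv : ∀ i : Fin 2, ∀ g ∈ Finset.univ.biUnion M, 0 ≤ v i g)
    {t : ℕ} (t' : Fin k) (ht : (t' : ℕ) = t)
    {T1 T2 : Finset G} (hT : T1 ∪ T2 = M t') (hTd : Disjoint T1 T2)
    (hpref : totalVal (v 0) T2 ≤ totalVal (v 0) T1)
    (hefx : ∀ g ∈ T1, totalVal (v 1) (T1.erase g) ≤ totalVal (v 1) T2)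
    {A1 A2 : Finset G} (hI : INV M v t A1 A2)
    (hy : totalVal (v 1) A1 ≤ totalVal (v 1) A2) :
    INV M v (t + 1) (A1 ∪ T1) (A2 ∪ T2) ∧
    totalVal (v 0) (A1 ∪ T1) = totalVal (v 0) A1 + totalVal (v 0) T1 ∧
    totalVal (v 0) (A2 ∪ T2) = totalVal (v 0) A2 + totalVal (v 0) T2 ∧
    totalVal (v 1) (A1 ∪ T1) = totalVal (v 1) A1 + totalVal (v 1) T1 ∧
    totalVal (v 1) (A2 ∪ T2) = totalVal (v 1) A2 + totalVal (v 1) T2 := by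
  obtain ⟨hUn, hD, hEFX, hEF1, hcur⟩ := hI
  have hT1S : T1 ⊆ M t' := hT ▸ Finset.subset_union_left
  have hT2S : T2 ⊆ M t' := hT ▸ Finset.subset_union_right
  have hA1P : A1 ⊆ prefixSet M t := hUn ▸ Finset.subset_union_left
  have hA2P : A2 ⊆ prefixSet M t := hUn ▸ Finset.subset_union_right
  have hday : Disjoint (M t') (prefixSet M t) := disjoint_day_prefixSet hdisj (by omega)
  have hT1A1 : Disjoint T1 A1 := (hday.mono hT1S hA1P)
  have hT1A2 : Disjoint T1 A2 := (hday.mono hT1S hA2P)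
  have hT2A1 : Disjoint T2 A1 := (hday.mono hT2S hA1P)
  have hT2A2 : Disjoint T2 A2 := (hday.mono hT2S hA2P)
  have hsubU : prefixSet M (t+1) ⊆ Finset.univ.biUnion M := prefixSet_subset M (t+1)
  have hP1 : A1 ∪ T1 ⊆ prefixSet M (t+1) := by
    rw [prefixSet_succ M ht]
    exact Finset.union_subset_union hA1P hT1S
  have hP2 : A2 ∪ T2 ⊆ prefixSet M (t+1) := by
    rw [prefixSet_succ M ht]
    exact Finset.union_subset_union hA2P hT2S
  have hnn : ∀ (i : Fin 2) (X : Finset G), X ⊆ prefixSet M (t+1) → ∀ g ∈ X, 0 ≤ v i g :=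
    fun i X hX g hg => hv i g (hsubU (hX hg))
  have hnnT1u : ∀ g ∈ T1, 0 ≤ v 0 g := hnn 0 _ (Finset.Subset.trans Finset.subset_union_right hP1)
  have hnnT1w : ∀ g ∈ T1, 0 ≤ v 1 g := hnn 1 _ (Finset.Subset.trans Finset.subset_union_right hP1)
  have hnnT2u : ∀ g ∈ T2, 0 ≤ v 0 g := hnn 0 _ (Finset.Subset.trans Finset.subset_union_right hP2)
  have hnnT2w : ∀ g ∈ T2, 0 ≤ v 1 g := hnn 1 _ (Finset.Subset.trans Finset.subset_union_right hP2)
  have hnnA1u : ∀ g ∈ A1, 0 ≤ v 0 g := hnn 0 _ (Finset.Subset.trans Finset.subset_union_left hP1)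
  have hnnP1u : ∀ g ∈ A1 ∪ T1, 0 ≤ v 0 g := hnn 0 _ hP1
  have hnnP1w : ∀ g ∈ A1 ∪ T1, 0 ≤ v 1 g := hnn 1 _ hP1
  have hnnP2u : ∀ g ∈ A2 ∪ T2, 0 ≤ v 0 g := hnn 0 _ hP2
  have hnnP2w : ∀ g ∈ A2 ∪ T2, 0 ≤ v 1 g := hnn 1 _ hP2
  have e11 : totalVal (v 0) (A1 ∪ T1) = totalVal (v 0) A1 + totalVal (v 0) T1 :=
    tv_union hT1A1.symm
  have e12 : totalVal (v 0) (A2 ∪ T2) = totalVal (v 0) A2 + totalVal (v 0) T2 :=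
    tv_union hT2A2.symm
  have e21 : totalVal (v 1) (A1 ∪ T1) = totalVal (v 1) A1 + totalVal (v 1) T1 :=
    tv_union hT1A1.symm
  have e22 : totalVal (v 1) (A2 ∪ T2) = totalVal (v 1) A2 + totalVal (v 1) T2 :=
    tv_union hT2A2.symm
  have hcur' : EF1 2 v (pairF (A1 ∪ T1) (A2 ∪ T2)) := by
    intro i j hj
    rcases fin2 i with rfl | rfl <;> rcases fin2 j with rfl | rfl
    · -- i = 0, j = 0
      simp only [pairF_zero] at hj ⊢
      exact witness_easy hj hnnP1u le_rfl
    · -- i = 0, j = 1 : agent 1 vs bundle of agent 2 (old witness / T2)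
      simp only [pairF_zero, pairF_one] at hj ⊢
      by_cases hA2e : A2 = ∅
      · subst hA2e
        rw [Finset.empty_union] at hj ⊢
        refine witness_easy hj hnnT2u ?_
        have hA1nn : 0 ≤ totalVal (v 0) A1 := tv_nonneg hnnA1u
        rw [e11]
        linarith
      · obtain ⟨g, hg, hgle⟩ := hcur 0 1 (by simpa using hA2e)
        simp only [pairF_zero, pairF_one] at hg hgle
        refine ⟨g, Finset.mem_union_left _ hg, ?_⟩
        have hgT2 : g ∉ T2 := fun h => (Finset.disjoint_left.mp hT2A2) h hg
        have herw : (A2 ∪ T2).erase g = A2.erase g ∪ T2 := by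
          rw [Finset.erase_union_distrib, Finset.erase_eq_of_notMem hgT2]
        rw [herw, e11]
        have hdis : Disjoint (A2.erase g) T2 := hT2A2.symm.mono_left (Finset.erase_subset _ _)
        rw [tv_union hdis]
        linarith
    · -- i = 1, j = 0 : agent 2 vs bundle of agent 1 (day EFX witness)
      simp only [pairF_zero, pairF_one] at hj ⊢
      by_cases hT1e : T1 = ∅
      · subst hT1e
        refine witness_easy hj hnnP1w ?_
        have h0 : totalVal (v 1) (∅ : Finset G) = 0 := by simp [totalVal]
        have hT2nn : 0 ≤ totalVal (v 1) T2 := tv_nonneg hnnT2w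
        rw [e21, e22, h0]
        linarith
      · obtain ⟨g, hg⟩ := Finset.nonempty_iff_ne_empty.mpr hT1e
        refine ⟨g, Finset.mem_union_right _ hg, ?_⟩
        have hgA1 : g ∉ A1 := fun h => (Finset.disjoint_left.mp hT1A1) hg h
        have herw : (A1 ∪ T1).erase g = A1 ∪ T1.erase g := by
          rw [Finset.erase_union_distrib, Finset.erase_eq_of_notMem hgA1]
        rw [herw, e22]
        have hdis : Disjoint A1 (T1.erase g) := (hT1A1.symm).mono_right (Finset.erase_subset _ _)
        rw [tv_union hdis]
        have := hefx g hg
        linarith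
    · -- i = 1, j = 1
      simp only [pairF_one] at hj ⊢
      exact witness_easy hj hnnP2w le_rfl
  have hinterOldDay : ∀ s : Fin k, (s : ℕ) < t →
      (fun i => pairF (A1 ∪ T1) (A2 ∪ T2) i ∩ M s) = (fun i => pairF A1 A2 i ∩ M s) := by
    intro s hs
    have hds : Disjoint (M t') (M s) := hdisj t' s (by intro h; subst h; omega)
    have h1 : T1 ∩ M s = ∅ := Finset.disjoint_iff_inter_eq_empty.mp (hds.mono_left hT1S)
    have h2 : T2 ∩ M s = ∅ := Finset.disjoint_iff_inter_eq_empty.mp (hds.mono_left hT2S)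
    funext i
    rcases fin2 i with rfl | rfl <;>
      simp only [pairF_zero, pairF_one, Finset.union_inter_distrib_right, h1, h2,
        Finset.union_empty]
  have hinterOldUp : ∀ s : Fin k, (s : ℕ) < t →
      (fun i => pairF (A1 ∪ T1) (A2 ∪ T2) i ∩ upTo M s) =
      (fun i => pairF A1 A2 i ∩ upTo M s) := by
    intro s hs
    have hds : Disjoint (M t') (upTo M s) := disjoint_day_upTo hdisj (by omega)
    have h1 : T1 ∩ upTo M s = ∅ := Finset.disjoint_iff_inter_eq_empty.mp (hds.mono_left hT1S)
    have h2 : T2 ∩ upTo M s = ∅ := Finset.disjoint_iff_inter_eq_empty.mp (hds.mono_left hT2S)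
    funext i
    rcases fin2 i with rfl | rfl <;>
      simp only [pairF_zero, pairF_one, Finset.union_inter_distrib_right, h1, h2,
        Finset.union_empty]
  refine ⟨⟨?_, ?_, ?_, ?_, hcur'⟩, e11, e12, e21, e22⟩
  · rw [prefixSet_succ M ht, ← hUn, ← hT]
    ext g
    simp only [Finset.mem_union]
    tauto
  · rw [Finset.disjoint_union_left]
    constructor
    · rw [Finset.disjoint_union_right]
      exact ⟨hD, hT2A1.symm⟩
    · rw [Finset.disjoint_union_right]
      exact ⟨hT1A2, hTd⟩
  · intro s hs
    rcases Nat.lt_or_ge (s : ℕ) t with hlt | hge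
    · rw [hinterOldDay s hlt]
      exact hEFX s hlt
    · have hseq : s = t' := Fin.ext (by omega)
      subst hseq
      have hfe : (fun i => pairF (A1 ∪ T1) (A2 ∪ T2) i ∩ M s) = pairF T1 T2 := by
        have h1 : A1 ∩ M s = ∅ :=
          Finset.disjoint_iff_inter_eq_empty.mp ((hday.mono_right hA1P).symm)
        have h2 : A2 ∩ M s = ∅ :=
          Finset.disjoint_iff_inter_eq_empty.mp ((hday.mono_right hA2P).symm)
        funext i
        rcases fin2 i with rfl | rfl <;>
          simp only [pairF_zero, pairF_one, Finset.union_inter_distrib_right, h1, h2,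
            Finset.empty_union, Finset.inter_eq_left.mpr hT1S, Finset.inter_eq_left.mpr hT2S]
      rw [hfe]
      intro i j g hg
      rcases fin2 i with rfl | rfl <;> rcases fin2 j with rfl | rfl
      · simp only [pairF_zero] at hg ⊢
        rw [tv_erase hg]
        have := hnnT1u g hg
        linarith
      · simp only [pairF_zero, pairF_one] at hg ⊢
        calc totalVal (v 0) (T2.erase g) ≤ totalVal (v 0) T2 := tv_erase_le hnnT2u
          _ ≤ totalVal (v 0) T1 := hpref
      · simp only [pairF_zero, pairF_one] at hg ⊢
        exact hefx g hg
      · simp only [pairF_one] at hg ⊢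
        rw [tv_erase hg]
        have := hnnT2w g hg
        linarith
  · intro s hs
    rcases Nat.lt_or_ge (s : ℕ) t with hlt | hge
    · rw [hinterOldUp s hlt]
      exact hEF1 s hlt
    · have hseq : s = t' := Fin.ext (by omega)
      subst hseq
      have hfe : (fun i => pairF (A1 ∪ T1) (A2 ∪ T2) i ∩ upTo M s) =
          pairF (A1 ∪ T1) (A2 ∪ T2) := by
        have hup : upTo M s = prefixSet M (t + 1) := by rw [upTo_eq]; congr 1; omega
        funext i
        rcases fin2 i with rfl | rfl <;>
          simp only [pairF_zero, pairF_one, hup, Finset.inter_eq_left.mpr hP1,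
            Finset.inter_eq_left.mpr hP2]
      rw [hfe]
      exact hcur'

end TFD

namespace TFD

set_option linter.unusedSectionVars false
set_option maxHeartbeats 1000000

variable {G : Type*} [DecidableEq G]

/-- The mirror/coupling induction: given two partial states whose envy vectors sum to
nonpositive values, at least one of them can be completed; hence a full good allocation
exists. -/
lemma mirror {k : ℕ} {M : Fin k → Finset G} {v : Fin 2 → G → ℝ}
    (hdisj : ∀ t t' : Fin k, t ≠ t' → Disjoint (M t) (M t'))
    (hv : ∀ i : Fin 2, ∀ g ∈ Finset.univ.biUnion M, 0 ≤ v i g)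
    (TA1 TA2 TB1 TB2 : Fin k → Finset G)
    (hA : ∀ τ : Fin k, TA1 τ ∪ TA2 τ = M τ ∧ Disjoint (TA1 τ) (TA2 τ) ∧
      totalVal (v 1) (TA1 τ) ≤ totalVal (v 1) (TA2 τ) ∧
      ∀ g ∈ TA2 τ, totalVal (v 0) ((TA2 τ).erase g) ≤ totalVal (v 0) (TA1 τ))
    (hB : ∀ τ : Fin k, TB1 τ ∪ TB2 τ = M τ ∧ Disjoint (TB1 τ) (TB2 τ) ∧
      totalVal (v 0) (TB2 τ) ≤ totalVal (v 0) (TB1 τ) ∧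
      ∀ g ∈ TB1 τ, totalVal (v 1) ((TB1 τ).erase g) ≤ totalVal (v 1) (TB2 τ))
    (hsums : ∀ τ : Fin k,
      (totalVal (v 0) (TA2 τ) - totalVal (v 0) (TA1 τ)) +
        (totalVal (v 0) (TB2 τ) - totalVal (v 0) (TB1 τ)) ≤ 0 ∧
      (totalVal (v 1) (TA1 τ) - totalVal (v 1) (TA2 τ)) +
        (totalVal (v 1) (TB1 τ) - totalVal (v 1) (TB2 τ)) ≤ 0) :
    ∀ m t : ℕ, t + m = k → ∀ A1 A2 B1 B2 : Finset G,
      INV M v t A1 A2 → INV M v t B1 B2 →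
      (totalVal (v 0) A2 - totalVal (v 0) A1) +
        (totalVal (v 0) B2 - totalVal (v 0) B1) ≤ 0 →
      (totalVal (v 1) A1 - totalVal (v 1) A2) +
        (totalVal (v 1) B1 - totalVal (v 1) B2) ≤ 0 →
      ∃ C1 C2, INV M v k C1 C2 := by
  intro m
  induction m with
  | zero =>
    intro t htk A1 A2 B1 B2 hIA _ _ _
    exact ⟨A1, A2, by rwa [show t = k by omega] at hIA⟩
  | succ m ih =>
    intro t htk A1 A2 B1 B2 hIA hIB hsx hsy
    have htk' : t < k := by omega
    set τ : Fin k := ⟨t, htk'⟩ with hτ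
    obtain ⟨hAu, hAd, hApref, hAefx⟩ := hA τ
    obtain ⟨hBu, hBd, hBpref, hBefx⟩ := hB τ
    obtain ⟨hs1, hs2⟩ := hsums τ
    by_cases hxA : totalVal (v 0) A2 ≤ totalVal (v 0) A1
    · by_cases hyA : totalVal (v 1) A1 ≤ totalVal (v 1) A2
      · -- state A is doubly nonpositive: branch on both moves applied to A
        obtain ⟨hI1, p11, p12, p13, p14⟩ := stepA hdisj hv τ rfl hAu hAd hApref hAefx hIA hxA
        obtain ⟨hI2, q11, q12, q13, q14⟩ := stepB hdisj hv τ rfl hBu hBd hBpref hBefx hIA hyA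
        exact ih (t+1) (by omega) _ _ _ _ hI1 hI2 (by linarith) (by linarith)
      · -- yA > 0 forces yB ≤ 0 : moves (A on A, B on B)
        have hyB : totalVal (v 1) B1 ≤ totalVal (v 1) B2 := by
          push_neg at hyA; linarith
        obtain ⟨hI1, p11, p12, p13, p14⟩ := stepA hdisj hv τ rfl hAu hAd hApref hAefx hIA hxA
        obtain ⟨hI2, q11, q12, q13, q14⟩ := stepB hdisj hv τ rfl hBu hBd hBpref hBefx hIB hyB
        exact ih (t+1) (by omega) _ _ _ _ hI1 hI2 (by linarith) (by linarith)
    · -- xA > 0 forces xB ≤ 0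
      have hxB : totalVal (v 0) B2 ≤ totalVal (v 0) B1 := by
        push_neg at hxA; linarith
      by_cases hyB : totalVal (v 1) B1 ≤ totalVal (v 1) B2
      · -- state B is doubly nonpositive
        obtain ⟨hI1, p11, p12, p13, p14⟩ := stepA hdisj hv τ rfl hAu hAd hApref hAefx hIB hxB
        obtain ⟨hI2, q11, q12, q13, q14⟩ := stepB hdisj hv τ rfl hBu hBd hBpref hBefx hIB hyB
        exact ih (t+1) (by omega) _ _ _ _ hI1 hI2 (by linarith) (by linarith)
      · -- yB > 0 forces yA ≤ 0 : moves (B on A, A on B)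
        have hyA : totalVal (v 1) A1 ≤ totalVal (v 1) A2 := by
          push_neg at hyB; linarith
        obtain ⟨hI1, p11, p12, p13, p14⟩ := stepB hdisj hv τ rfl hBu hBd hBpref hBefx hIA hyA
        obtain ⟨hI2, q11, q12, q13, q14⟩ := stepA hdisj hv τ rfl hAu hAd hApref hAefx hIB hxB
        exact ih (t+1) (by omega) _ _ _ _ hI1 hI2 (by linarith) (by linarith)

end TFD

/-- For every temporal fair division instance with two agents, there is
an allocation of all the goods that is EFX per day and EF1 up to each day. -/
theorem two_agents_efx_perDay_ef1_upToEachDay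
    {G : Type*} [DecidableEq G] (k : ℕ)
    (M : Fin k → Finset G)
    (hdisj : ∀ t t' : Fin k, t ≠ t' → Disjoint (M t) (M t'))
    (v : Fin 2 → G → ℝ)
    (hv : ∀ i : Fin 2, ∀ g ∈ Finset.univ.biUnion M, 0 ≤ v i g) :
    ∃ A : Fin 2 → Finset G,
      IsAlloc 2 (Finset.univ.biUnion M) A ∧
      (∀ t : Fin k, EFX 2 v (fun i => A i ∩ M t)) ∧
      (∀ t : Fin k, EF1 2 v (fun i => A i ∩ upTo M t)) := by
  classical
  have hvS : ∀ (i : Fin 2) (τ : Fin k), ∀ g ∈ M τ, 0 ≤ v i g :=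
    fun i τ g hg => hv i g (Finset.mem_biUnion.mpr ⟨τ, Finset.mem_univ τ, hg⟩)
  choose P1 hP1s hP1b hP1e hP1m using fun τ : Fin k => TFD.exists_cut (v 0) (M τ) (hvS 0 τ)
  choose P2 hP2s hP2b hP2e hP2m using fun τ : Fin k => TFD.exists_cut (v 1) (M τ) (hvS 1 τ)
  set TA1 : Fin k → Finset G := fun τ =>
    if totalVal (v 1) (M τ \ P1 τ) ≤ totalVal (v 1) (P1 τ) then M τ \ P1 τ else P1 τ with hTA1
  set TA2 : Fin k → Finset G := fun τ =>
    if totalVal (v 1) (M τ \ P1 τ) ≤ totalVal (v 1) (P1 τ) then P1 τ else M τ \ P1 τ with hTA2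
  set TB1 : Fin k → Finset G := fun τ =>
    if totalVal (v 0) (M τ \ P2 τ) ≤ totalVal (v 0) (P2 τ) then P2 τ else M τ \ P2 τ with hTB1
  set TB2 : Fin k → Finset G := fun τ =>
    if totalVal (v 0) (M τ \ P2 τ) ≤ totalVal (v 0) (P2 τ) then M τ \ P2 τ else P2 τ with hTB2
  have hA : ∀ τ : Fin k, TA1 τ ∪ TA2 τ = M τ ∧ Disjoint (TA1 τ) (TA2 τ) ∧
      totalVal (v 1) (TA1 τ) ≤ totalVal (v 1) (TA2 τ) ∧
      ∀ g ∈ TA2 τ, totalVal (v 0) ((TA2 τ).erase g) ≤ totalVal (v 0) (TA1 τ) := by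
    intro τ
    simp only [hTA1, hTA2]
    split_ifs with h
    · exact ⟨Finset.sdiff_union_of_subset (hP1s τ), Finset.sdiff_disjoint, h, hP1e τ⟩
    · refine ⟨by rw [Finset.union_comm]; exact Finset.sdiff_union_of_subset (hP1s τ),
        Finset.sdiff_disjoint.symm, le_of_not_ge h, ?_⟩
      intro g hg
      calc totalVal (v 0) ((M τ \ P1 τ).erase g) ≤ totalVal (v 0) (M τ \ P1 τ) :=
            TFD.tv_erase_le (fun x hx => hvS 0 τ x (Finset.sdiff_subset hx))
        _ ≤ totalVal (v 0) (P1 τ) := hP1b τ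
  have hB : ∀ τ : Fin k, TB1 τ ∪ TB2 τ = M τ ∧ Disjoint (TB1 τ) (TB2 τ) ∧
      totalVal (v 0) (TB2 τ) ≤ totalVal (v 0) (TB1 τ) ∧
      ∀ g ∈ TB1 τ, totalVal (v 1) ((TB1 τ).erase g) ≤ totalVal (v 1) (TB2 τ) := by
    intro τ
    simp only [hTB1, hTB2]
    split_ifs with h
    · refine ⟨by rw [Finset.union_comm]; exact Finset.sdiff_union_of_subset (hP2s τ),
        Finset.sdiff_disjoint.symm, h, hP2e τ⟩
    · refine ⟨Finset.sdiff_union_of_subset (hP2s τ), Finset.sdiff_disjoint,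
        le_of_not_ge h, ?_⟩
      intro g hg
      calc totalVal (v 1) ((M τ \ P2 τ).erase g) ≤ totalVal (v 1) (M τ \ P2 τ) :=
            TFD.tv_erase_le (fun x hx => hvS 1 τ x (Finset.sdiff_subset hx))
        _ ≤ totalVal (v 1) (P2 τ) := hP2b τ
  have hsums : ∀ τ : Fin k,
      (totalVal (v 0) (TA2 τ) - totalVal (v 0) (TA1 τ)) +
        (totalVal (v 0) (TB2 τ) - totalVal (v 0) (TB1 τ)) ≤ 0 ∧
      (totalVal (v 1) (TA1 τ) - totalVal (v 1) (TA2 τ)) +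
        (totalVal (v 1) (TB1 τ) - totalVal (v 1) (TB2 τ)) ≤ 0 := by
    intro τ
    have hd1 : 0 ≤ totalVal (v 0) (P1 τ) - totalVal (v 0) (M τ \ P1 τ) := by
      have := hP1b τ; linarith
    have hd2 : 0 ≤ totalVal (v 1) (P2 τ) - totalVal (v 1) (M τ \ P2 τ) := by
      have := hP2b τ; linarith
    -- the A-sides differ (in v 0) by at most the minimal imbalance d1
    have hA0 : totalVal (v 0) (TA2 τ) - totalVal (v 0) (TA1 τ) ≤
        totalVal (v 0) (P1 τ) - totalVal (v 0) (M τ \ P1 τ) := by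
      simp only [hTA1, hTA2]
      split_ifs with h
      · linarith
      · linarith
    have hB1 : totalVal (v 1) (TB1 τ) - totalVal (v 1) (TB2 τ) ≤
        totalVal (v 1) (P2 τ) - totalVal (v 1) (M τ \ P2 τ) := by
      simp only [hTB1, hTB2]
      split_ifs with h
      · linarith
      · linarith
    -- the B-sides differ (in v 0) by at least d1 (minimality of the cut of agent 1)
    have hBcompl : M τ \ TB1 τ = TB2 τ := by
      simp only [hTB1, hTB2]
      split_ifs with h
      · rfl
      · exact Finset.sdiff_sdiff_eq_self (hP2s τ)
    have hBsub : TB1 τ ⊆ M τ := by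
      simp only [hTB1]
      split_ifs with h
      · exact hP2s τ
      · exact Finset.sdiff_subset
    have hB0 : totalVal (v 0) (P1 τ) - totalVal (v 0) (M τ \ P1 τ) ≤
        totalVal (v 0) (TB1 τ) - totalVal (v 0) (TB2 τ) := by
      have := hP1m τ (TB1 τ) hBsub
      rw [hBcompl] at this
      rwa [abs_of_nonneg (by have := (hB τ).2.2.1; linarith)] at this
    have hAcompl : M τ \ TA1 τ = TA2 τ := by
      simp only [hTA1, hTA2]
      split_ifs with h
      · exact Finset.sdiff_sdiff_eq_self (hP1s τ)
      · rfl
    have hAsub : TA1 τ ⊆ M τ := by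
      simp only [hTA1]
      split_ifs with h
      · exact Finset.sdiff_subset
      · exact hP1s τ
    have hA1 : totalVal (v 1) (P2 τ) - totalVal (v 1) (M τ \ P2 τ) ≤
        totalVal (v 1) (TA2 τ) - totalVal (v 1) (TA1 τ) := by
      have := hP2m τ (TA1 τ) hAsub
      rw [hAcompl] at this
      rw [abs_sub_comm] at this
      rwa [abs_of_nonneg (by have := (hA τ).2.2.1; linarith)] at this
    constructor
    · linarith
    · linarith
  have hINV0 : TFD.INV M v 0 (∅ : Finset G) (∅ : Finset G) := by
    refine ⟨by rw [TFD.prefixSet_zero]; simp, Finset.disjoint_empty_left _,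
      fun s hs => absurd hs (by omega), fun s hs => absurd hs (by omega), ?_⟩
    intro i j hj
    rcases TFD.fin2 j with rfl | rfl <;> simp [TFD.pairF] at hj
  have h0 : totalVal (v 0) (∅ : Finset G) = 0 := by simp [totalVal]
  have h1 : totalVal (v 1) (∅ : Finset G) = 0 := by simp [totalVal]
  obtain ⟨C1, C2, hC⟩ := TFD.mirror hdisj hv TA1 TA2 TB1 TB2 hA hB hsums k 0 (by omega)
    ∅ ∅ ∅ ∅ hINV0 hINV0 (by rw [h0]; linarith) (by rw [h1]; linarith)
  obtain ⟨hCu, hCd, hCefx, hCef1, _⟩ := hC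
  refine ⟨TFD.pairF C1 C2, ⟨?_, ?_⟩, fun t => hCefx t t.isLt, fun t => hCef1 t t.isLt⟩
  · intro i j hij
    rcases TFD.fin2 i with rfl | rfl <;> rcases TFD.fin2 j with rfl | rfl
    · exact absurd rfl hij
    · exact hCd
    · exact hCd.symm
    · exact absurd rfl hij
  · have hCU : C1 ∪ C2 = Finset.univ.biUnion M := by rw [hCu, TFD.prefixSet_top]
    ext g
    simp only [Finset.mem_biUnion, Finset.mem_univ, true_and]
    constructor
    · rintro ⟨i, hi⟩
      have hg : g ∈ C1 ∪ C2 := by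
        rcases TFD.fin2 i with rfl | rfl
        · exact Finset.mem_union_left _ hi
        · exact Finset.mem_union_right _ hi
      rw [hCU, Finset.mem_biUnion] at hg
      obtain ⟨τ, _, hτ⟩ := hg
      exact ⟨τ, hτ⟩
    · rintro ⟨τ, hτ⟩
      have hg : g ∈ C1 ∪ C2 := by
        rw [hCU, Finset.mem_biUnion]
        exact ⟨τ, Finset.mem_univ τ, hτ⟩
      rcases Finset.mem_union.mp hg with h | h
      · exact ⟨0, h⟩
      · exact ⟨1, h⟩
end
end

section
/- For any two agents with additive nonnegative valuations over a finite set of goods S, there exist two allocations B and B' of S, each of which is EFX, that cancel out. -/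
open Finset
open scoped Classical

noncomputable section

section Aux

variable {G : Type*} [DecidableEq G]

lemma totalVal_erase_le (v : G → ℝ) {X : Finset G} (h : ∀ g ∈ X, 0 ≤ v g) (g : G) :
    totalVal v (X.erase g) ≤ totalVal v X :=
  Finset.sum_le_sum_of_subset_of_nonneg (Finset.erase_subset _ _) (fun i hi _ => h i hi)

lemma totalVal_add_sdiff (v : G → ℝ) {X S : Finset G} (h : X ⊆ S) :
    totalVal v X + totalVal v (S \ X) = totalVal v S := by
  rw [totalVal, totalVal, totalVal, ← Finset.sum_sdiff h]; ring

/-- There is a cut `(X, S \ X)` that is symmetric-EFX under `v` and maximizes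
the minimum value. -/
lemma exists_good_cut (S : Finset G) (v : G → ℝ) (hv : ∀ g ∈ S, 0 ≤ v g) :
    ∃ X ⊆ S,
      (∀ Z ⊆ S, min (totalVal v Z) (totalVal v (S \ Z)) ≤
          min (totalVal v X) (totalVal v (S \ X))) ∧
      (∀ g ∈ X, totalVal v (X.erase g) ≤ totalVal v (S \ X)) ∧
      (∀ g ∈ S \ X, totalVal v ((S \ X).erase g) ≤ totalVal v X) := by
  set m : Finset G → ℝ := fun Z => min (totalVal v Z) (totalVal v (S \ Z)) with hm
  set sc : Finset G → ℕ :=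
    fun Z => if totalVal v Z ≤ totalVal v (S \ Z) then Z.card else (S \ Z).card with hsc
  obtain ⟨X0, hX0mem, hX0max⟩ :=
    S.powerset.exists_max_image m ⟨∅, Finset.empty_mem_powerset S⟩
  obtain ⟨X, hXmem, hXmax⟩ :=
    (S.powerset.filter (fun Z => m X0 ≤ m Z)).exists_max_image sc
      ⟨X0, by simp [hX0mem]⟩
  simp only [Finset.mem_filter, Finset.mem_powerset] at hXmem
  obtain ⟨hXS, hX0X⟩ := hXmem
  -- X is an m-maximizer
  have hmmax : ∀ Z ⊆ S, m Z ≤ m X := by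
    intro Z hZ
    exact le_trans (hX0max Z (Finset.mem_powerset.2 hZ)) hX0X
  -- among m-maximizers, X maximizes sc
  have hscmax : ∀ Z ⊆ S, m X ≤ m Z → sc Z ≤ sc X := by
    intro Z hZ hmZ
    exact hXmax Z (by simp [Finset.mem_powerset.2 hZ, le_trans hX0X hmZ])
  refine ⟨X, hXS, hmmax, ?_, ?_⟩
  · -- ∀ g ∈ X, totalVal v (X.erase g) ≤ totalVal v (S \ X)
    intro g hg
    by_contra hcon
    push_neg at hcon
    have hgS : g ∈ S := hXS hg
    have hc0 : 0 ≤ v g := hv g hgS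
    set X' := X.erase g with hX'
    have hX'S : X' ⊆ S := (Finset.erase_subset _ _).trans hXS
    have hcompl : S \ X' = insert g (S \ X) := by
      ext x
      simp only [hX', Finset.mem_sdiff, Finset.mem_erase, Finset.mem_insert]
      constructor
      · rintro ⟨hxS, hx⟩
        by_cases hxg : x = g
        · exact Or.inl hxg
        · exact Or.inr ⟨hxS, fun hxX => hx ⟨hxg, hxX⟩⟩
      · rintro (rfl | ⟨hxS, hxX⟩)
        · exact ⟨hgS, fun h => h.1 rfl⟩
        · exact ⟨hxS, fun h => hxX h.2⟩
    have hgnot : g ∉ S \ X := fun h => (Finset.mem_sdiff.1 h).2 hg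
    have htX' : totalVal v X' = totalVal v X - v g := Finset.sum_erase_eq_sub hg
    have htY' : totalVal v (S \ X') = totalVal v (S \ X) + v g := by
      rw [hcompl, totalVal, Finset.sum_insert hgnot, totalVal]; ring
    set a := totalVal v X
    set b := totalVal v (S \ X)
    -- hcon : b < a - v g
    have hba : b < a := lt_of_lt_of_le hcon (by linarith)
    rcases lt_or_eq_of_le hc0 with hcpos | hczero
    · have : m X < m X' := by
        have h1 : m X = b := min_eq_right hba.le
        have h2 : b < min (totalVal v X') (totalVal v (S \ X')) := by
          rw [htX', htY']
          exact lt_min (by linarith) (by linarith)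
        rw [h1]; exact h2
      exact absurd (hmmax X' hX'S) (not_le.2 this)
    · -- v g = 0
      have hveq : v g = 0 := hczero.symm
      have hmeq : m X' = m X := by
        simp only [hm, htX', htY', hveq]; ring_nf; rfl
      have hsle : sc X' ≤ sc X := hscmax X' hX'S (le_of_eq hmeq.symm)
      have hscX : sc X = (S \ X).card := by
        simp only [hsc]; rw [if_neg (not_le.2 hba)]
      have hscX' : sc X' = (S \ X).card + 1 := by
        have hnle : ¬ totalVal v X' ≤ totalVal v (S \ X') := by
          rw [htX', htY', hveq]; push_neg; linarith
        simp only [hsc]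
        rw [if_neg hnle, hcompl, Finset.card_insert_of_notMem hgnot]
      omega
  · -- ∀ g ∈ S \ X, totalVal v ((S \ X).erase g) ≤ totalVal v X
    intro g hg
    by_contra hcon
    push_neg at hcon
    rw [show totalVal v ((S \ X).erase g) = totalVal v (S \ X) - v g from
      Finset.sum_erase_eq_sub hg] at hcon
    have hgS : g ∈ S := (Finset.mem_sdiff.1 hg).1
    have hgX : g ∉ X := (Finset.mem_sdiff.1 hg).2
    have hc0 : 0 ≤ v g := hv g hgS
    set X' := insert g X with hX'
    have hX'S : X' ⊆ S := Finset.insert_subset hgS hXS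
    have hcompl : S \ X' = (S \ X).erase g := by
      rw [hX', Finset.sdiff_insert]
    have htX' : totalVal v X' = totalVal v X + v g := by
      rw [hX', totalVal, Finset.sum_insert hgX, totalVal]; ring
    have htY' : totalVal v (S \ X') = totalVal v (S \ X) - v g := by
      rw [hcompl]; exact Finset.sum_erase_eq_sub hg
    set a := totalVal v X
    set b := totalVal v (S \ X)
    -- hcon : a < b - v g
    have hab : a < b := lt_of_lt_of_le hcon (by linarith)
    rcases lt_or_eq_of_le hc0 with hcpos | hczero
    · have : m X < m X' := by
        have h1 : m X = a := min_eq_left hab.le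
        have h2 : a < min (totalVal v X') (totalVal v (S \ X')) := by
          rw [htX', htY']
          exact lt_min (by linarith) (by linarith)
        rw [h1]; exact h2
      exact absurd (hmmax X' hX'S) (not_le.2 this)
    · have hveq : v g = 0 := hczero.symm
      have hmeq : m X' = m X := by
        simp only [hm, htX', htY', hveq]; ring_nf; rfl
      have hsle : sc X' ≤ sc X := hscmax X' hX'S (le_of_eq hmeq.symm)
      have hscX : sc X = X.card := by
        simp only [hsc]; rw [if_pos hab.le]
      have hscX' : sc X' = X.card + 1 := by
        have hle : totalVal v X' ≤ totalVal v (S \ X') := by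
          rw [htX', htY', hveq]; linarith
        simp only [hsc]
        rw [if_pos hle, hX', Finset.card_insert_of_notMem hgX]
      omega

/-- Cut-and-choose: `u` cuts, `w` chooses; `C` goes to the cutter, `D` to the chooser. -/
lemma cut_and_choose (S : Finset G) (u w : G → ℝ)
    (hu : ∀ g ∈ S, 0 ≤ u g) :
    ∃ C D : Finset G, Disjoint C D ∧ C ∪ D = S ∧
      (∀ g ∈ D, totalVal u (D.erase g) ≤ totalVal u C) ∧
      totalVal w C ≤ totalVal w D ∧
      (∀ Z ⊆ S, min (totalVal u Z) (totalVal u (S \ Z)) ≤ totalVal u C) ∧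
      (∃ Z ⊆ S, totalVal w S ≤ totalVal w D + min (totalVal w Z) (totalVal w (S \ Z))) := by
  obtain ⟨X, hXS, hmax, hEFX1, hEFX2⟩ := exists_good_cut S u hu
  have hdisj : Disjoint X (S \ X) := Finset.disjoint_sdiff
  have hunion : X ∪ (S \ X) = S := Finset.union_sdiff_of_subset hXS
  have hwsum : totalVal w X + totalVal w (S \ X) = totalVal w S := totalVal_add_sdiff w hXS
  by_cases hch : totalVal w X ≤ totalVal w (S \ X)
  · -- chooser takes S \ X, cutter keeps X
    refine ⟨X, S \ X, hdisj, hunion, hEFX2, hch, ?_, ⟨X, hXS, ?_⟩⟩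
    · intro Z hZ
      exact le_trans (hmax Z hZ) (min_le_left _ _)
    · have : min (totalVal w X) (totalVal w (S \ X)) = totalVal w X := min_eq_left hch
      rw [this]; linarith
  · push_neg at hch
    refine ⟨S \ X, X, hdisj.symm, by rw [Finset.union_comm]; exact hunion, hEFX1, hch.le, ?_,
      ⟨X, hXS, ?_⟩⟩
    · intro Z hZ
      exact le_trans (hmax Z hZ) (min_le_right _ _)
    · have : min (totalVal w X) (totalVal w (S \ X)) = totalVal w (S \ X) := min_eq_right hch.le
      rw [this]; linarith

end Aux

/-- For any two agents with additive nonnegative valuations over a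
finite set of goods `S`, there are two EFX allocations `B` and `B'` of `S` that cancel
out: `v i (B i) + v i (B' i) ≥ v i (B (3−i)) + v i (B' (3−i))` for each agent `i`. -/
theorem exists_two_efx_allocations_that_cancel_out
    {G : Type*} [DecidableEq G] (S : Finset G) (v : Fin 2 → G → ℝ)
    (hv : ∀ i : Fin 2, ∀ g ∈ S, 0 ≤ v i g) :
    ∃ B B' : Fin 2 → Finset G,
      IsAlloc 2 S B ∧ IsAlloc 2 S B' ∧ EFX 2 v B ∧ EFX 2 v B' ∧
      ∀ i : Fin 2,
        totalVal (v i) (B (1 - i)) + totalVal (v i) (B' (1 - i)) ≤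
          totalVal (v i) (B i) + totalVal (v i) (B' i) := by
  -- B : agent 0 cuts, agent 1 chooses (C to agent 0, D to agent 1)
  obtain ⟨C, D, hd, hun, hcutEFX, hchEF, hCg, hDg⟩ := cut_and_choose S (v 0) (v 1) (hv 0)
  -- B' : agent 1 cuts, agent 0 chooses (C' to agent 1, D' to agent 0)
  obtain ⟨C', D', hd', hun', hcutEFX', hchEF', hCg', hDg'⟩ := cut_and_choose S (v 1) (v 0) (hv 1)
  set B : Fin 2 → Finset G := fun i => if i = 0 then C else D with hB
  set B' : Fin 2 → Finset G := fun i => if i = 0 then D' else C' with hB'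
  have h10 : (1 : Fin 2) ≠ 0 := by decide
  have hB0 : B 0 = C := rfl
  have hB1 : B 1 = D := if_neg h10
  have hB'0 : B' 0 = D' := rfl
  have hB'1 : B' 1 = C' := if_neg h10
  have hCS : C ⊆ S := hun ▸ Finset.subset_union_left
  have hDS : D ⊆ S := hun ▸ Finset.subset_union_right
  have hC'S : C' ⊆ S := hun' ▸ Finset.subset_union_left
  have hD'S : D' ⊆ S := hun' ▸ Finset.subset_union_right
  have hvC : ∀ i, ∀ g ∈ C, 0 ≤ v i g := fun i g hg => hv i g (hCS hg)
  have hvD : ∀ i, ∀ g ∈ D, 0 ≤ v i g := fun i g hg => hv i g (hDS hg)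
  have hvC' : ∀ i, ∀ g ∈ C', 0 ≤ v i g := fun i g hg => hv i g (hC'S hg)
  have hvD' : ∀ i, ∀ g ∈ D', 0 ≤ v i g := fun i g hg => hv i g (hD'S hg)
  have hsum : ∀ i, totalVal (v i) C + totalVal (v i) D = totalVal (v i) S := by
    intro i
    rw [totalVal, totalVal, totalVal, ← Finset.sum_union hd, hun]
  have hsum' : ∀ i, totalVal (v i) D' + totalVal (v i) C' = totalVal (v i) S := by
    intro i
    rw [totalVal, totalVal, totalVal, add_comm, ← Finset.sum_union hd', hun']
  have hAllocB : IsAlloc 2 S B := by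
    constructor
    · intro i j hij
      fin_cases i <;> fin_cases j <;> simp_all [hB] <;> first
        | exact hd | exact hd.symm
    · ext x
      simp only [Finset.mem_biUnion, Finset.mem_univ, true_and]
      rw [Fin.exists_fin_two, hB0, hB1, ← Finset.mem_union, hun]
  have hAllocB' : IsAlloc 2 S B' := by
    constructor
    · intro i j hij
      fin_cases i <;> fin_cases j <;> simp_all [hB'] <;> first
        | exact hd'.symm | exact hd'
    · ext x
      simp only [Finset.mem_biUnion, Finset.mem_univ, true_and]
      rw [Fin.exists_fin_two, hB'0, hB'1, ← Finset.mem_union, Finset.union_comm, hun']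
  have hEFXB : EFX 2 v B := by
    intro i j g hg
    fin_cases i <;> fin_cases j <;>
      simp only [Fin.zero_eta, Fin.mk_one, hB0, hB1] at hg ⊢
    · exact totalVal_erase_le (v 0) (hvC 0) g
    · exact hcutEFX g hg
    · exact le_trans (totalVal_erase_le (v 1) (hvC 1) g) hchEF
    · exact totalVal_erase_le (v 1) (hvD 1) g
  have hEFXB' : EFX 2 v B' := by
    intro i j g hg
    fin_cases i <;> fin_cases j <;>
      simp only [Fin.zero_eta, Fin.mk_one, hB'0, hB'1] at hg ⊢
    · exact totalVal_erase_le (v 0) (hvD' 0) g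
    · exact le_trans (totalVal_erase_le (v 0) (hvC' 0) g) hchEF'
    · exact hcutEFX' g hg
    · exact totalVal_erase_le (v 1) (hvC' 1) g
  refine ⟨B, B', hAllocB, hAllocB', hEFXB, hEFXB', ?_⟩
  intro i
  fin_cases i
  · -- agent 0
    have h1 : (1 - 0 : Fin 2) = 1 := rfl
    simp only [Fin.zero_eta, h1, hB0, hB1, hB'0, hB'1]
    obtain ⟨Z, hZS, hZ⟩ := hDg'
    have := hCg Z hZS
    have e1 := hsum 0
    have e2 := hsum' 0
    linarith
  · -- agent 1
    have h1 : (1 - 1 : Fin 2) = 0 := rfl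
    simp only [Fin.mk_one, h1, hB0, hB1, hB'0, hB'1]
    obtain ⟨Z, hZS, hZ⟩ := hDg
    have := hCg' Z hZS
    have e1 := hsum 1
    have e2 := hsum' 1
    linarith
end
end
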